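/- arXiv:math/9801026 — 12 statements merged into one kernel-verified Lean document; each statement's English description precedes it below -/
import Mathlib

section
/- If f : ℝ → ℝ is smooth (C^∞), nonnegative, and at every point its Taylor series is not identically zero (i.e. f is nowhere flat of infinite order), then there exists a smooth function x : ℝ → ℝ with x(t)^2 = f(t) for all t. -/
/-!
Near each point `z`, `f` vanishes to some finite order `n`, and Hadamard's lemma (applied `n`
times) writes `f t = (t - z) ^ n * g t` with `g` smooth and `g z ≠ 0`; nonnegativity forces
`n = 2k` and `g z > 0`, so `√f = |t - z| ^ k * √g` near `z`, and the zeros of `f` are isolated.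
This is smooth except at zeros of odd `k`, where `|t - z| ^ k` has a corner; multiplying `√f`
by `(-1)` to the number of points of the set `O` of those zeros between `0` and `t`, a sign
that flips exactly at the points of `O`, turns every `|t - z| ^ k` into `± (t - z) ^ k`.
-/

open Set Filter Topology Function MeasureTheory
open scoped Interval ContDiff Nat

section ParametricIntegral

variable {E : Type*} [NormedAddCommGroup E] [NormedSpace ℝ E]

theorem hasDerivAt_parametric_intervalIntegral {F F' : ℝ → ℝ → E}
    (hF : Continuous (uncurry F)) (hF' : Continuous (uncurry F'))
    (hd : ∀ x s, HasDerivAt (F · s) (F' x s) x) (a b x₀ : ℝ) :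
    HasDerivAt (fun x => ∫ s in a..b, F x s) (∫ s in a..b, F' x₀ s) x₀ := by
  have hK : IsCompact (Metric.closedBall x₀ 1 ×ˢ [[a, b]]) :=
    (isCompact_closedBall x₀ 1).prod isCompact_uIcc
  obtain ⟨C, hC⟩ := hK.exists_bound_of_continuousOn hF'.continuousOn
  exact (intervalIntegral.hasDerivAt_integral_of_dominated_loc_of_deriv_le
    (bound := fun _ => C) (Metric.ball_mem_nhds x₀ one_pos)
    (.of_forall fun x => (hF.uncurry_left x).aestronglyMeasurable)
    ((hF.uncurry_left x₀).intervalIntegrable a b) (hF'.uncurry_left x₀).aestronglyMeasurable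
    (ae_of_all _ fun s hs x hx =>
      hC (x, s) ⟨Metric.ball_subset_closedBall hx, uIoc_subset_uIcc hs⟩)
    intervalIntegrable_const (ae_of_all _ fun s _ x _ => hd x s)).2

theorem contDiff_parametric_intervalIntegral_of_contDiff {n : ℕ∞} {F : ℝ → ℝ → E}
    (hF : ContDiff ℝ n (uncurry F)) (a b : ℝ) :
    ContDiff ℝ n (fun x => ∫ s in a..b, F x s) := by
  suffices key : ∀ (m : ℕ) (F : ℝ → ℝ → E), ContDiff ℝ m (uncurry F) →
      ContDiff ℝ m (fun x => ∫ s in a..b, F x s) by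
    rw [contDiff_iff_forall_nat_le] at hF ⊢
    exact fun m hm => key m F (hF m hm)
  intro m
  induction m with
  | zero =>
    exact fun F hF => contDiff_zero.2
      (intervalIntegral.continuous_parametric_intervalIntegral_of_continuous' hF.continuous a b)
  | succ m ih =>
    intro F hF
    set F' : ℝ → ℝ → E := fun x s => fderiv ℝ (uncurry F) (x, s) (1, 0)
    have hF' : ContDiff ℝ m (uncurry F') := (hF.fderiv_right le_rfl).clm_apply contDiff_const
    have hd (x s : ℝ) : HasDerivAt (F · s) (F' x s) x :=
      (((hF.differentiable (by simp)) (x, s)).hasFDerivAt.comp_hasDerivAt x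
        ((hasDerivAt_id x).prodMk (hasDerivAt_const x s)) :)
    have hint := hasDerivAt_parametric_intervalIntegral hF.continuous hF'.continuous hd a b
    rw [Nat.cast_succ, contDiff_succ_iff_deriv]
    refine ⟨fun x => (hint x).differentiableAt, by simp, ?_⟩
    rw [funext fun x => (hint x).deriv]
    exact ih F' hF'

/-- Hadamard's lemma: `g t = ∫₀¹ f' (z + s (t - z)) ds`. -/
theorem exists_contDiff_eq_add_sub_smul [CompleteSpace E] {n : ℕ∞} {f : ℝ → E}
    (hf : ContDiff ℝ (n + 1) f) (z : ℝ) :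
    ∃ g : ℝ → E, ContDiff ℝ n g ∧ ∀ t, f t = f z + (t - z) • g t := by
  obtain ⟨hdiff, -, hf'⟩ := contDiff_succ_iff_deriv.1 hf
  refine ⟨fun t => ∫ s in (0 : ℝ)..1, deriv f (z + s * (t - z)),
    contDiff_parametric_intervalIntegral_of_contDiff (hf'.comp (by fun_prop)) 0 1, fun t => ?_⟩
  have hseg : ∀ s ∈ uIcc (0 : ℝ) 1, HasDerivAt (fun s => f (z + s * (t - z)))
      ((t - z) • deriv f (z + s * (t - z))) s := fun s _ => by
    simpa [Function.comp_def] using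
      (hdiff _).hasDerivAt.scomp s (((hasDerivAt_id s).mul_const (t - z)).const_add z)
  have hcont : Continuous fun s => deriv f (z + s * (t - z)) :=
    hf'.continuous.comp (by fun_prop)
  have hftc := intervalIntegral.integral_eq_sub_of_hasDerivAt hseg
    ((hcont.const_smul (t - z)).intervalIntegrable 0 1)
  rw [intervalIntegral.integral_smul] at hftc
  simp only [one_mul, add_sub_cancel, zero_mul, add_zero] at hftc
  rw [hftc, add_sub_cancel]

end ParametricIntegral

theorem iteratedDeriv_eq_factorial_mul_of_eq_sub_pow_mul {n : ℕ} {f g : ℝ → ℝ} {z : ℝ}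
    (hg : ContDiffAt ℝ n g z) (hfg : ∀ t, f t = (t - z) ^ n * g t) :
    iteratedDeriv n f z = n ! * g z := by
  rw [funext hfg, iteratedDeriv_fun_mul (by fun_prop) hg,
    Finset.sum_eq_single_of_mem n (by simp)]
  · simp [iteratedDeriv_comp_sub_const (f := (· ^ n)), Nat.descFactorial_self]
  · intro i hi hin
    have : n - i ≠ 0 := by rw [Finset.mem_range] at hi; omega
    simp [iteratedDeriv_comp_sub_const (f := (· ^ n)), this]

theorem exists_eq_sub_pow_mul_of_iteratedDeriv_eq_zero {f : ℝ → ℝ} (hf : ContDiff ℝ ∞ f)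
    {z : ℝ} {n : ℕ} (h : ∀ j < n, iteratedDeriv j f z = 0) :
    ∃ g : ℝ → ℝ, ContDiff ℝ ∞ g ∧ ∀ t, f t = (t - z) ^ n * g t := by
  induction n with
  | zero => exact ⟨f, hf, by simp⟩
  | succ n ih =>
    obtain ⟨g, hg, hfg⟩ := ih fun j hj => h j (by omega)
    have hgz : g z = 0 := by
      have := h n (by omega)
      rw [iteratedDeriv_eq_factorial_mul_of_eq_sub_pow_mul
        (hg.of_le (by exact_mod_cast le_top)).contDiffAt hfg] at this
      simpa [Nat.factorial_ne_zero] using this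
    obtain ⟨q, hq, hgq⟩ := exists_contDiff_eq_add_sub_smul (n := ⊤) (by simpa using hg) z
    exact ⟨q, hq, fun t => by rw [hfg, hgq, hgz, smul_eq_mul]; ring⟩

theorem pos_and_even_of_nonneg_sub_pow_mul {g : ℝ → ℝ} {z : ℝ} {n : ℕ}
    (hg : ContinuousAt g z) (hgz : g z ≠ 0) (h : ∀ t, 0 ≤ (t - z) ^ n * g t) :
    0 < g z ∧ Even n := by
  have hsign : ∀ᶠ t in 𝓝 z, 0 < g t * g z :=
    (hg.mul continuousAt_const).eventually (lt_mem_nhds (mul_self_pos.2 hgz))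
  obtain ⟨t, ht, hzt⟩ := ((hsign.filter_mono nhdsWithin_le_nhds).and
    (self_mem_nhdsWithin (s := Ioi z))).exists
  have hgz : 0 < g z :=
    pos_of_mul_pos_right ht (nonneg_of_mul_nonneg_right (h t) (pow_pos (sub_pos.2 hzt) n))
  refine ⟨hgz, ?_⟩
  obtain ⟨t, ht, htz⟩ := ((hsign.filter_mono nhdsWithin_le_nhds).and
    (self_mem_nhdsWithin (s := Iio z))).exists
  have hpow := nonneg_of_mul_nonneg_left (h t) (pos_of_mul_pos_left ht hgz.le)
  by_contra hodd
  exact (Nat.not_even_iff_odd.1 hodd |>.pow_neg (sub_neg.2 htz)).not_ge hpow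

theorem exists_eq_sub_pow_two_mul_of_nonneg {f : ℝ → ℝ} (hf : ContDiff ℝ ∞ f)
    (hpos : ∀ t, 0 ≤ f t) {z : ℝ} (hz : ∃ n, iteratedDeriv n f z ≠ 0) :
    ∃ (k : ℕ) (g : ℝ → ℝ), ContDiff ℝ ∞ g ∧ 0 < g z ∧
      ∀ t, f t = (t - z) ^ (2 * k) * g t := by
  classical
  obtain ⟨g, hg, hfg⟩ := exists_eq_sub_pow_mul_of_iteratedDeriv_eq_zero hf
    fun j hj => not_not.1 (Nat.find_min hz hj)
  have hgz : g z ≠ 0 := by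
    have := Nat.find_spec hz
    rw [iteratedDeriv_eq_factorial_mul_of_eq_sub_pow_mul
      (hg.of_le (by exact_mod_cast le_top)).contDiffAt hfg] at this
    exact right_ne_zero_of_mul this
  obtain ⟨hgz, k, hk⟩ := pos_and_even_of_nonneg_sub_pow_mul hg.continuous.continuousAt hgz
    fun t => hfg t ▸ hpos t
  exact ⟨k, g, hg, hgz, fun t => by rw [hfg, hk, two_mul]⟩

theorem IsCompact.finite_inter_of_forall_eventually_notMem {X : Type*} [TopologicalSpace X]
    {K O : Set X} (hK : IsCompact K) (hO : ∀ x ∈ K, ∀ᶠ y in 𝓝[≠] x, y ∉ O) :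
    (O ∩ K).Finite := by
  by_contra hinf
  obtain ⟨x, hxK, hx⟩ :=
    Set.Infinite.exists_accPt_of_subset_isCompact hinf hK inter_subset_right
  obtain ⟨y, hyO, hy⟩ := ((hO x hxK).and_frequently (accPt_iff_frequently_nhdsNE.1 hx)).exists
  exact hyO hy.1

theorem neg_one_pow_ncard_eq_mul_ite {α : Type*} {A : Set α} (hA : A.Finite) (z : α)
    [Decidable (z ∈ A)] :
    (-1 : ℝ) ^ A.ncard = (-1) ^ (A \ {z}).ncard * if z ∈ A then -1 else 1 := by
  by_cases hz : z ∈ A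
  · rw [← Set.ncard_sdiff_singleton_add_one hz hA, pow_succ, if_pos hz]
  · rw [Set.sdiff_singleton_eq_self hz, if_neg hz, mul_one]

noncomputable def crossingSign (O : Set ℝ) (t : ℝ) : ℝ := (-1) ^ (O ∩ Ι 0 t).ncard

theorem crossingSign_sq (O : Set ℝ) (t : ℝ) : crossingSign O t ^ 2 = 1 := by
  rw [crossingSign, ← pow_mul, mul_comm, pow_mul]
  norm_num

theorem eventually_crossingSign_eq {O : Set ℝ} [DecidablePred (· ∈ O)]
    (hO : ∀ z, ∀ᶠ t in 𝓝[≠] z, t ∉ O) (z : ℝ) :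
    ∀ᶠ t in 𝓝 z,
      crossingSign O t = crossingSign O z * if z ∈ O ∧ t < z then -1 else 1 := by
  classical
  have hfin (t : ℝ) : (O ∩ Ι 0 t).Finite :=
    (isCompact_uIcc.finite_inter_of_forall_eventually_notMem fun x _ => hO x).subset
      (inter_subset_inter_right _ uIoc_subset_uIcc)
  obtain ⟨ε, hε, hεO⟩ := Metric.eventually_nhds_iff.1 (eventually_nhdsWithin_iff.1 (hO z))
  filter_upwards [Metric.ball_mem_nhds z hε] with t ht
  have hnear : |t - z| < ε := ht
  have hsame : (O ∩ Ι 0 t) \ {z} = (O ∩ Ι 0 z) \ {z} := by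
    ext s
    simp only [Set.mem_sdiff, mem_inter_iff, mem_singleton_iff, and_congr_left_iff,
      and_congr_right_iff]
    intro hsz hsO
    have hfar : ε ≤ |s - z| := not_lt.1 fun h => hεO h hsz hsO
    simp only [mem_uIoc]
    grind [abs_lt, le_abs]
  have hcross : (if z ∈ O ∩ Ι 0 t then (-1 : ℝ) else 1) =
      (if z ∈ O ∩ Ι 0 z then -1 else 1) * if z ∈ O ∧ t < z then -1 else 1 := by
    simp only [mem_inter_iff, mem_uIoc]
    split_ifs <;> grind
  rw [crossingSign, crossingSign, neg_one_pow_ncard_eq_mul_ite (hfin t) z,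
    neg_one_pow_ncard_eq_mul_ite (hfin z) z, hsame, hcross, mul_assoc]

theorem ite_mul_abs_sub_pow (k : ℕ) (x y : ℝ) [Decidable (Odd k ∧ x < y)] :
    (if Odd k ∧ x < y then -1 else 1) * |x - y| ^ k = (x - y) ^ k := by
  split_ifs with h
  · rw [abs_of_neg (sub_neg.2 h.2), h.1.neg_pow, neg_one_mul, neg_neg]
  · rw [one_mul]
    rcases Nat.even_or_odd k with hk | hk
    · exact hk.pow_abs _
    · rw [abs_of_nonneg (sub_nonneg.2 (not_lt.1 fun hxy => h ⟨hk, hxy⟩))]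

theorem Real.sqrt_pow_two_mul_mul (x y : ℝ) (k : ℕ) :
    √(x ^ (2 * k) * y) = |x| ^ k * √y := by
  rw [Real.sqrt_mul ((even_two_mul k).pow_nonneg x), pow_mul', Real.sqrt_sq_eq_abs, abs_pow]

/-- If `f : ℝ → ℝ` is smooth, nonnegative, and nowhere flat of infinite order
(at every point some derivative is nonzero), then there is a smooth global
square root `x` with `x t ^ 2 = f t` for all `t`. -/
theorem smooth_sqrt_of_nowhere_flat (f : ℝ → ℝ)
    (hf : ContDiff ℝ (⊤ : ℕ∞) f)
    (hpos : ∀ t, 0 ≤ f t)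
    (hflat : ∀ t₀ : ℝ, ∃ n : ℕ, iteratedDeriv n f t₀ ≠ 0) :
    ∃ x : ℝ → ℝ, ContDiff ℝ (⊤ : ℕ∞) x ∧ ∀ t, x t ^ 2 = f t := by
  choose k g hg hgz hfg using fun z => exists_eq_sub_pow_two_mul_of_nonneg hf hpos (hflat z)
  set O := {z | Odd (k z)}
  have hO (z : ℝ) : ∀ᶠ t in 𝓝[≠] z, t ∉ O := by
    filter_upwards [nhdsWithin_le_nhds ((hg z).continuous.continuousAt.eventually
      (lt_mem_nhds (hgz z))), self_mem_nhdsWithin] with t hgt htz htO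
    have hft : f t = 0 := by rw [hfg t t, sub_self, zero_pow (by grind), zero_mul]
    rw [hfg z t] at hft
    exact (mul_pos ((even_two_mul _).pow_pos (sub_ne_zero.2 htz)) hgt).ne' hft
  refine ⟨fun t => crossingSign O t * √(f t), contDiff_iff_contDiffAt.2 fun z => ?_,
    fun t => by rw [mul_pow, crossingSign_sq, one_mul, Real.sq_sqrt (hpos t)]⟩
  have hsmooth : ContDiffAt ℝ ∞ (fun t => crossingSign O z * ((t - z) ^ k z * √(g z t))) z :=
    contDiffAt_const.mul ((by fun_prop : ContDiffAt ℝ ∞ (fun t => (t - z) ^ k z) z).mul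
      ((hg z).contDiffAt.sqrt (hgz z).ne'))
  refine hsmooth.congr_of_eventuallyEq ?_
  filter_upwards [eventually_crossingSign_eq hO z] with t ht
  rw [ht, hfg z t, Real.sqrt_pow_two_mul_mul, mul_assoc, ← mul_assoc (ite _ _ _)]
  exact congrArg (fun c => crossingSign O z * (c * √(g z t))) (ite_mul_abs_sub_pow (k z) t z)
end

section
/- Let f : ℝ → ℝ be a C² function with f ≥ 0 and f(t₀) = 0. Then for all t, f'(t)² ≤ 2 f(t) · max { f''(t₀ + r(t - t₀)) : 0 ≤ r ≤ 2 }. -/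
/-!
Let `M` be the maximum of `f''` on the segment `[t₀, 2t - t₀]`, centred at `t` with radius
`d = |t - t₀|`. Taylor's theorem at `t` gives `0 ≤ f (t + h) ≤ f t + f' t * h + M h² / 2` for
`|h| ≤ d`, and at `t₀`, where `f` and `f'` vanish, it gives `f t ≤ M d² / 2`. Together, at
`h = ±d`, these force `|f' t| ≤ M d`, so the vertex `h = -f' t / M` of the quadratic is admissible,
and evaluating there yields `f' t ^ 2 ≤ 2 f t M`.
-/

open Set

theorem image_const_add_mul_const_Icc_zero_two (a d : ℝ) :
    (fun r : ℝ => a + r * d) '' Icc 0 2 = uIcc a (a + 2 * d) := by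
  have h : (fun r : ℝ => a + r * d) = (a + ·) ∘ (· * d) := rfl
  rw [h, image_comp, ← uIcc_of_le zero_le_two, image_mul_const_uIcc, image_const_add_uIcc]
  simp

theorem ContDiff.le_taylor_two_of_iteratedDeriv_le {f : ℝ → ℝ} (hf : ContDiff ℝ 2 f) {x₀ x M : ℝ}
    (hM : ∀ y ∈ uIcc x₀ x, iteratedDeriv 2 f y ≤ M) :
    f x ≤ f x₀ + deriv f x₀ * (x - x₀) + M * (x - x₀) ^ 2 / 2 := by
  rcases eq_or_ne x₀ x with rfl | hx
  · simp
  obtain ⟨y, hy, hTaylor⟩ := taylor_mean_remainder_lagrange_iteratedDeriv (n := 1) hx hf.contDiffOn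
  have hderiv : derivWithin f (uIcc x₀ x) x₀ = deriv f x₀ :=
    (hf.differentiable two_ne_zero x₀).derivWithin (uniqueDiffOn_uIcc hx x₀ left_mem_uIcc)
  simp only [taylor_within_apply, Finset.sum_range_succ, Finset.sum_range_zero,
    iteratedDerivWithin_zero, iteratedDerivWithin_one, hderiv] at hTaylor
  have hM_y := hM y (Ioo_subset_Icc_self hy)
  norm_num [Nat.factorial] at hTaylor
  nlinarith [sq_nonneg (x - x₀)]

theorem sq_le_two_mul_of_forall_abs_le_quadratic_nonneg {a p M d : ℝ} (hd : 0 < d)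
    (ha : a ≤ M * d ^ 2 / 2) (hq : ∀ h, |h| ≤ d → 0 ≤ a + p * h + M * h ^ 2 / 2) :
    p ^ 2 ≤ 2 * a * M := by
  have ha₀ : 0 ≤ a := by simpa using hq 0 (by simpa using hd.le)
  have hM : 0 ≤ M := by nlinarith [pow_pos hd 2]
  have hp : |p| ≤ M * d := by
    have hq_d := hq d (abs_of_pos hd).le
    have hq_neg_d := hq (-d) (by rw [abs_neg, abs_of_pos hd])
    rw [abs_le]; constructor <;> nlinarith
  rcases hM.eq_or_lt with rfl | hM
  · have : p = 0 := abs_nonpos_iff.1 (by simpa using hp)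
    simp [this]
  · have hv := hq (-p / M) (by rw [abs_div, abs_neg, abs_of_pos hM, div_le_iff₀ hM]; linarith)
    field_simp at hv
    nlinarith

theorem add_mem_uIcc_of_abs_le_abs_sub {t₀ t h : ℝ} (hh : |h| ≤ |t - t₀|) :
    t + h ∈ uIcc t₀ (t₀ + 2 * (t - t₀)) := by
  rw [mem_uIcc]
  rcases abs_le.1 hh with ⟨hl, hr⟩
  rcases le_total t₀ t with ht | ht
  · rw [abs_of_nonneg (sub_nonneg.2 ht)] at hl hr
    left; constructor <;> linarith
  · rw [abs_of_nonpos (sub_nonpos.2 ht)] at hl hr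
    right; constructor <;> linarith

/-- Lemma 2.2: if `f` is `C²`, nonnegative and vanishes at `t₀`, then for all `t`,
`f'(t)² ≤ 2 f(t) · max {f''(t₀ + r(t - t₀)) : 0 ≤ r ≤ 2}`. -/
theorem deriv_sq_le_of_nonneg_C2 (f : ℝ → ℝ) (t₀ : ℝ)
    (hf : ContDiff ℝ 2 f)
    (hpos : ∀ t, 0 ≤ f t)
    (h0 : f t₀ = 0) :
    ∀ t : ℝ, (deriv f t) ^ 2 ≤
      2 * f t * sSup ((fun r : ℝ => iteratedDeriv 2 f (t₀ + r * (t - t₀))) '' Set.Icc 0 2) := by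
  intro t
  have hderiv₀ : deriv f t₀ = 0 :=
    IsLocalMin.deriv_eq_zero (.of_forall fun y => h0 ▸ hpos y)
  rcases eq_or_ne t t₀ with rfl | ht
  · simp [h0, hderiv₀]
  rw [← image_image (iteratedDeriv 2 f) (fun r => t₀ + r * (t - t₀)),
    image_const_add_mul_const_Icc_zero_two]
  set S := uIcc t₀ (t₀ + 2 * (t - t₀))
  set M := sSup (iteratedDeriv 2 f '' S)
  have hle : ∀ y ∈ S, iteratedDeriv 2 f y ≤ M := fun y hy =>
    le_csSup (isCompact_uIcc.image (hf.continuous_iteratedDeriv 2 le_rfl)).bddAbove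
      (mem_image_of_mem _ hy)
  have ht_mem : t ∈ S := by simpa using add_mem_uIcc_of_abs_le_abs_sub (h := 0) (by simp)
  refine sq_le_two_mul_of_forall_abs_le_quadratic_nonneg (abs_pos.2 (sub_ne_zero.2 ht)) ?_
    fun h hh => ?_
  · have := hf.le_taylor_two_of_iteratedDeriv_le fun y hy =>
      hle y (uIcc_subset_uIcc left_mem_uIcc ht_mem hy)
    rwa [h0, hderiv₀, zero_mul, zero_add, zero_add, ← sq_abs] at this
  · have := hf.le_taylor_two_of_iteratedDeriv_le fun y hy =>
      hle y (uIcc_subset_uIcc ht_mem (add_mem_uIcc_of_abs_le_abs_sub hh) hy)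
    simp only [add_sub_cancel_left] at this
    linarith [hpos (t + h)]
end

section
/- The function f(t) = t²·sin²(log t) for t > 0, extended by f(0) = 0 (and f(t)=t²sin²(log(−t)) for t<0), is C¹ and nonnegative, but there is no function x differentiable at 0 with x(t)² = f(t) for all t near 0. -/
open Filter Real Topology

/-! Write `f t = t ^ 2 * φ t` with `φ = sin² ∘ log` bounded. Then `f'(0) = 0` and off `0`
`f' t = t * ψ t` with `ψ` bounded, so `f'` is continuous. A square root `x` differentiable at
`0` has `x 0 = 0`, so `φ t = (x t / t) ^ 2 → x'(0) ^ 2`; but along `t = exp (c - nπ) → 0`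
the function `φ` is constantly `sin c ^ 2`, so `φ` has no limit at `0`. -/

theorem tendsto_mul_nhds_zero_of_abs_le {ψ : ℝ → ℝ} {C : ℝ} (hψ : ∀ t, |ψ t| ≤ C) :
    Tendsto (fun t => t * ψ t) (𝓝 0) (𝓝 0) :=
  tendsto_id.zero_mul_isBoundedUnder_le ⟨C, eventually_map.2 (.of_forall hψ)⟩

theorem hasDerivAt_sq_mul_zero_of_abs_le {φ : ℝ → ℝ} {C : ℝ} (hφ : ∀ t, |φ t| ≤ C) :
    HasDerivAt (fun t => t ^ 2 * φ t) 0 0 := by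
  rw [hasDerivAt_iff_tendsto_slope]
  refine ((tendsto_mul_nhds_zero_of_abs_le hφ).mono_left nhdsWithin_le_nhds).congr' ?_
  filter_upwards [self_mem_nhdsWithin] with t (ht : t ≠ 0)
  rw [slope_def_field]
  field_simp
  ring

theorem contDiff_one_sq_mul {φ ψ : ℝ → ℝ} {C D : ℝ} (hφ : ∀ t, |φ t| ≤ C) (hψ : ∀ t, |ψ t| ≤ D)
    (hψc : ∀ t ≠ 0, ContinuousAt ψ t)
    (hderiv : ∀ t ≠ 0, HasDerivAt (fun t => t ^ 2 * φ t) (t * ψ t) t) :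
    ContDiff ℝ 1 (fun t => t ^ 2 * φ t) := by
  have hf : ∀ t, HasDerivAt (fun t => t ^ 2 * φ t) (t * ψ t) t := by
    intro t
    rcases eq_or_ne t 0 with rfl | ht
    · simpa using hasDerivAt_sq_mul_zero_of_abs_le hφ
    · exact hderiv t ht
  have hcont : Continuous fun t => t * ψ t := by
    refine continuous_iff_continuousAt.2 fun t => ?_
    rcases eq_or_ne t 0 with rfl | ht
    · simpa [ContinuousAt] using tendsto_mul_nhds_zero_of_abs_le hψ
    · exact continuousAt_id.mul (hψc t ht)
  rw [contDiff_one_iff_deriv]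
  refine ⟨fun t => (hf t).differentiableAt, ?_⟩
  rwa [show deriv _ = _ from funext fun t => (hf t).deriv]

theorem hasDerivAt_sq_mul_sin_log_sq {t : ℝ} (ht : t ≠ 0) :
    HasDerivAt (fun t => t ^ 2 * sin (log t) ^ 2)
      (t * (2 * sin (log t) * (sin (log t) + cos (log t)))) t := by
  have hsin : HasDerivAt (fun t => sin (log t)) (cos (log t) * t⁻¹) t :=
    (hasDerivAt_sin _).comp t (hasDerivAt_log ht)
  refine ((hasDerivAt_pow 2 t).mul (hsin.pow 2)).congr_deriv ?_
  simp only [Pi.pow_apply]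
  field_simp
  ring

theorem contDiff_sq_mul_sin_log_sq : ContDiff ℝ 1 (fun t => t ^ 2 * sin (log t) ^ 2) := by
  refine contDiff_one_sq_mul (C := 1) (D := 4) (fun t => ?_) (fun t => ?_) (fun t ht => ?_)
    (fun t ht => hasDerivAt_sq_mul_sin_log_sq ht)
  · rw [abs_of_nonneg (sq_nonneg _)]
    exact sin_sq_le_one _
  · have hs := abs_sin_le_one (log t)
    have hc := abs_cos_le_one (log t)
    rw [abs_mul, abs_mul, abs_two]
    nlinarith [abs_add_le (sin (log t)) (cos (log t)), abs_nonneg (sin (log t)),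
      abs_nonneg (sin (log t) + cos (log t))]
  · have := continuousAt_log ht
    fun_prop

theorem tendsto_deriv_sq_of_sq_eq_sq_mul {x φ : ℝ → ℝ} (hx : DifferentiableAt ℝ x 0)
    (hsq : ∀ᶠ t in 𝓝 0, x t ^ 2 = t ^ 2 * φ t) :
    Tendsto φ (𝓝[≠] 0) (𝓝 (deriv x 0 ^ 2)) := by
  have hx0 : x 0 = 0 := by simpa using hsq.self_of_nhds
  refine ((hasDerivAt_iff_tendsto_slope.1 hx.hasDerivAt).pow 2).congr' ?_
  filter_upwards [nhdsWithin_le_nhds hsq, self_mem_nhdsWithin] with t hxt (ht : t ≠ 0)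
  rw [slope_def_field, hx0, sub_zero, sub_zero, div_pow, hxt]
  field_simp

theorem not_tendsto_sin_log_sq (l : ℝ) :
    ¬ Tendsto (fun t => sin (log t) ^ 2) (𝓝[≠] 0) (𝓝 l) := by
  intro h
  have hconst : ∀ c, sin c ^ 2 = l := fun c => by
    have hseq : Tendsto (fun n : ℕ => exp (c - n * π)) atTop (𝓝[≠] 0) := by
      refine (nhdsGT_le_nhdsNE 0).trans' (tendsto_exp_atBot_nhdsGT.comp ?_)
      exact tendsto_atBot_add_const_left _ c
        (tendsto_neg_atBot_iff.2 (tendsto_natCast_atTop_atTop.atTop_mul_const pi_pos))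
    refine tendsto_nhds_unique ?_ (h.comp hseq)
    simp [Function.comp_def, sin_sub_nat_mul_pi, mul_pow, ← pow_mul, pow_mul']
  have h0 := hconst 0
  have h1 := hconst (π / 2)
  simp only [sin_zero, sin_pi_div_two] at h0 h1
  norm_num [← h0] at h1

/-- Example 2.3 (first): `f t = t² sin²(log |t|)` (with `f 0 = 0`) is a nonnegative
`C¹` function admitting no square root differentiable at `0`.
(Note `Real.log` already satisfies `Real.log (-t) = Real.log t` and `Real.log 0 = 0`.) -/
theorem no_differentiable_sqrt_of_C1 :
    ContDiff ℝ 1 (fun t : ℝ => t ^ 2 * Real.sin (Real.log t) ^ 2) ∧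
    (∀ t : ℝ, 0 ≤ t ^ 2 * Real.sin (Real.log t) ^ 2) ∧
    ¬ ∃ x : ℝ → ℝ, DifferentiableAt ℝ x 0 ∧
        ∀ᶠ t in nhds (0 : ℝ), x t ^ 2 = t ^ 2 * Real.sin (Real.log t) ^ 2 := by
  refine ⟨contDiff_sq_mul_sin_log_sq, fun t => by positivity, ?_⟩
  rintro ⟨x, hx, hsq⟩
  exact not_tendsto_sin_log_sq _ (tendsto_deriv_sq_of_sq_eq_sq_mul hx hsq)
end

section
/- The function f(t) = t⁴·sin²(1/t) for t ≠ 0, f(0) = 0, is twice differentiable and nonnegative, but every function x with x² = f on a neighborhood of 0 fails to be C¹ at 0. -/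
/-!
Write `t⁴ sin²(1/t) = u(t)²` with `u(t) = t² sin(1/t)`. Since `u = O(t²)` and `u'` is bounded
near `0`, both `u²` and its derivative `2uu'` are `O(t²)`, hence differentiable at `0` with
derivative `0`. A square root `x` has `|x| = |u| ≤ t²`, so `x'(0) = 0`; and wherever `u ≠ 0`,
differentiating `x² = u²` gives `x'² = u'²`. Along `tₙ = 1/(π/3 + 2πn) → 0` we have
`u'(tₙ) → -cos(π/3) = -1/2`, so `x'` is not continuous at `0`.
-/

open Real Filter Topology Asymptotics

theorem hasDerivAt_zero_of_isBigO_pow {𝕜 E : Type*} [NontriviallyNormedField 𝕜]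
    [NormedAddCommGroup E] [NormedSpace 𝕜 E] {g : 𝕜 → E} {n : ℕ} (hn : 1 < n)
    (hg : g =O[𝓝 0] fun t => t ^ n) : HasDerivAt g 0 0 := by
  have hg0 : g 0 = 0 := hg.eq_zero_imp.self_of_nhds (zero_pow (by omega))
  rw [hasDerivAt_iff_isLittleO_nhds_zero]
  simpa [hg0] using hg.trans_isLittleO (isLittleO_pow_id hn)

theorem sq_deriv_eq_sq_of_sq_eventuallyEq {𝕜 : Type*} [NontriviallyNormedField 𝕜] [CharZero 𝕜]
    {f g : 𝕜 → 𝕜} {g' t : 𝕜} (hfg : ∀ᶠ s in 𝓝 t, f s ^ 2 = g s ^ 2)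
    (hf : DifferentiableAt 𝕜 f t) (hg : HasDerivAt g g' t) (hgt : g t ≠ 0) :
    deriv f t ^ 2 = g' ^ 2 := by
  have hsq : 2 * f t * deriv f t = 2 * g t * g' := by
    simpa using ((hf.hasDerivAt.pow 2).congr_of_eventuallyEq (hfg.mono fun _ h => h.symm)).unique
      (hg.pow 2)
  refine mul_left_cancel₀ (pow_ne_zero 2 hgt) ?_
  linear_combination (1 / 4 : 𝕜) * (2 * f t * deriv f t + 2 * g t * g') * hsq
    - deriv f t ^ 2 * hfg.self_of_nhds

theorem tendsto_mul_sin_inv : Tendsto (fun t : ℝ => t * sin (1 / t)) (𝓝 0) (𝓝 0) := by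
  refine (IsBigO.of_bound 1 (.of_forall fun t => ?_)).trans_tendsto tendsto_id
  rw [norm_mul, one_mul]
  exact mul_le_of_le_one_right (norm_nonneg _) (abs_sin_le_one _)

noncomputable def sqMulSinInv (t : ℝ) : ℝ := t ^ 2 * sin (1 / t)

/-- The derivative of `sqMulSinInv` away from `0`; at `0` its value is `-1` (as `1 / 0 = 0`),
not the derivative `0`. -/
noncomputable def sqMulSinInvDeriv (t : ℝ) : ℝ := 2 * t * sin (1 / t) - cos (1 / t)

theorem sqMulSinInv_sq (t : ℝ) : sqMulSinInv t ^ 2 = t ^ 4 * sin (1 / t) ^ 2 := by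
  rw [sqMulSinInv]
  ring

theorem isBigO_sqMulSinInv : sqMulSinInv =O[𝓝 0] fun t => t ^ 2 :=
  .of_bound 1 <| .of_forall fun t => by
    rw [sqMulSinInv, norm_mul, one_mul]
    exact mul_le_of_le_one_right (norm_nonneg _) (abs_sin_le_one _)

theorem isBigO_sqMulSinInvDeriv : sqMulSinInvDeriv =O[𝓝 0] fun _ => (1 : ℝ) := by
  have hcos : (fun t : ℝ => cos (1 / t)) =O[𝓝 0] fun _ => (1 : ℝ) :=
    .of_bound 1 <| .of_forall fun t => by simpa using abs_cos_le_one _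
  exact (((tendsto_mul_sin_inv.const_mul 2).isBigO_one ℝ).sub hcos).congr_left fun t => by
    rw [sqMulSinInvDeriv, mul_assoc]

theorem hasDerivAt_sqMulSinInv {t : ℝ} (ht : t ≠ 0) :
    HasDerivAt sqMulSinInv (sqMulSinInvDeriv t) t := by
  have hinv : HasDerivAt (fun s : ℝ => 1 / s) (-(t ^ 2)⁻¹) t := by
    simpa [one_div] using hasDerivAt_inv ht
  refine ((hasDerivAt_pow 2 t).mul hinv.sin).congr_deriv ?_
  rw [sqMulSinInvDeriv]
  field_simp
  ring

theorem hasDerivAt_sqMulSinInv_sq (t : ℝ) :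
    HasDerivAt (fun t => sqMulSinInv t ^ 2) (2 * sqMulSinInv t * sqMulSinInvDeriv t) t := by
  rcases eq_or_ne t 0 with rfl | ht
  · have := hasDerivAt_zero_of_isBigO_pow (by norm_num : 1 < 4)
      (by simpa only [← pow_mul] using isBigO_sqMulSinInv.pow 2)
    simpa [sqMulSinInv] using this
  · exact ((hasDerivAt_sqMulSinInv ht).pow 2).congr_deriv (by ring)

theorem differentiableAt_deriv_sqMulSinInv_sq (t : ℝ) :
    DifferentiableAt ℝ (deriv fun t => sqMulSinInv t ^ 2) t := by
  rw [funext fun t => (hasDerivAt_sqMulSinInv_sq t).deriv]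
  rcases eq_or_ne t 0 with rfl | ht
  · refine (hasDerivAt_zero_of_isBigO_pow one_lt_two ?_).differentiableAt
    simpa using (isBigO_sqMulSinInv.const_mul_left 2).mul isBigO_sqMulSinInvDeriv
  · have : DifferentiableAt ℝ (fun s : ℝ => 1 / s) t := by
      simpa [one_div] using differentiableAt_inv ht
    unfold sqMulSinInv sqMulSinInvDeriv
    fun_prop

theorem exists_seq_tendsto_sqMulSinInvDeriv :
    ∃ t : ℕ → ℝ, Tendsto t atTop (𝓝 0) ∧ (∀ n, sqMulSinInv (t n) ≠ 0) ∧
      Tendsto (fun n => sqMulSinInvDeriv (t n)) atTop (𝓝 (-(1 / 2))) := by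
  set θ : ℕ → ℝ := fun n => π / 3 + n * (2 * π)
  have hθ : Tendsto θ atTop atTop := tendsto_atTop_add_const_left _ _
    (tendsto_natCast_atTop_atTop.atTop_mul_const (by positivity))
  have ht := tendsto_inv_atTop_zero.comp hθ
  refine ⟨fun n => (θ n)⁻¹, ht, fun n => ?_, ?_⟩
  · have : 0 < sin (π / 3) := sin_pos_of_pos_of_lt_pi (by positivity) (by linarith [pi_pos])
    simp only [sqMulSinInv, θ, one_div, inv_inv, sin_add_nat_mul_two_pi]
    positivity
  · convert ((tendsto_mul_sin_inv.const_mul 2).comp ht).sub_const (1 / 2) using 2 with n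
    · simp [sqMulSinInvDeriv, θ, cos_add_nat_mul_two_pi, mul_assoc]
    · norm_num

theorem not_contDiffAt_one_of_sq_eventuallyEq_sqMulSinInv_sq {x : ℝ → ℝ}
    (hx : ∀ᶠ t in 𝓝 0, x t ^ 2 = sqMulSinInv t ^ 2) : ¬ ContDiffAt ℝ 1 x 0 := by
  intro hC
  have hx0 : HasDerivAt x 0 0 := hasDerivAt_zero_of_isBigO_pow one_lt_two <|
    (IsBigO.of_bound 1 (hx.mono fun t ht => by simp [(sq_eq_sq_iff_abs_eq_abs _ _).1 ht])).trans
      isBigO_sqMulSinInv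
  have hderiv : Tendsto (deriv x) (𝓝 0) (𝓝 0) := by
    simpa [hx0.deriv] using
      ((hC.continuousAt_fderiv one_ne_zero).clm_apply (continuousAt_const (y := (1 : ℝ)))).tendsto
  obtain ⟨t, ht, hu, hu'⟩ := exists_seq_tendsto_sqMulSinInvDeriv
  have hsq : ∀ᶠ n in atTop, deriv x (t n) ^ 2 = sqMulSinInvDeriv (t n) ^ 2 := by
    filter_upwards [ht.eventually hx.eventually_nhds, ht.eventually (hC.eventually (by simp))]
      with n hxn hCn
    have htn : t n ≠ 0 := fun h => hu n (by simp [h, sqMulSinInv])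
    exact sq_deriv_eq_sq_of_sq_eventuallyEq hxn (hCn.differentiableAt one_ne_zero)
      (hasDerivAt_sqMulSinInv htn) (hu n)
  have := tendsto_nhds_unique (((hderiv.comp ht).pow 2).congr' hsq) (hu'.pow 2)
  norm_num at this

/-- Example 2.3 (second): `f t = t⁴ sin²(1/t)` (with `f 0 = 0`, using `1/0 = 0`)
is nonnegative and twice differentiable, but any square root of `f` near `0`
fails to be `C¹` at `0`. -/
theorem no_C1_sqrt_of_twice_differentiable :
    (Differentiable ℝ (fun t : ℝ => t ^ 4 * Real.sin (1 / t) ^ 2)) ∧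
    (∀ t : ℝ, DifferentiableAt ℝ (deriv (fun t : ℝ => t ^ 4 * Real.sin (1 / t) ^ 2)) t) ∧
    (∀ t : ℝ, 0 ≤ t ^ 4 * Real.sin (1 / t) ^ 2) ∧
    ∀ x : ℝ → ℝ, (∀ᶠ t in nhds (0 : ℝ), x t ^ 2 = t ^ 4 * Real.sin (1 / t) ^ 2) →
      ¬ ContDiffAt ℝ 1 x 0 := by
  simp only [← sqMulSinInv_sq]
  exact ⟨fun t => (hasDerivAt_sqMulSinInv_sq t).differentiableAt,
    differentiableAt_deriv_sqMulSinInv_sq, fun t => sq_nonneg _,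
    fun _ => not_contDiffAt_one_of_sq_eventuallyEq_sqMulSinInv_sq⟩
end

section
/- The function f(t) = sin²(1/t)·e^{−1/t} + e^{−2/t} for t > 0 and f(t) = 0 for t ≤ 0 is a nonnegative C^∞ function, which is the sum of two nonnegative C^∞ functions each admitting a C^∞ square root, but f itself admits no C² square root near 0. -/
/-!
Write `f = h² + e²` with `h t = sin (1/t) e^{-1/(2t)}` and `e t = e^{-1/t}` (both `0` for `t ≤ 0`);
`h` is smooth by the argument that makes `expNegInvGlue` smooth. If `g² = h² + e²` near a point
where `h = 0 ≠ e`, differentiating twice gives `g² = e²` and `g g' = e e'`, hence `g'² = e'²` and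
`g g'' = h'² + e e''`, so `h'² / |e| ≤ |g''| + |e''|`. At `t = 1/(kπ)` the left side is `(kπ)⁴`,
so `g''` cannot be bounded near `0`.
-/

open Filter Real Polynomial
open scoped Topology

section SecondDerivative

variable {u : ℝ → ℝ} {t : ℝ}

theorem ContDiffAt.eventually_hasDerivAt_deriv (hu : ContDiffAt ℝ 2 u t) :
    ∀ᶠ s in 𝓝 t, HasDerivAt u (deriv u s) s :=
  (hu.eventually (by simp)).mono fun _ hs => (hs.differentiableAt (by simp)).hasDerivAt

theorem ContDiffAt.hasDerivAt_deriv_deriv (hu : ContDiffAt ℝ 2 u t) :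
    HasDerivAt (deriv u) (deriv (deriv u) t) t :=
  ((hu.derivWithin (m := 1) (by norm_num)).differentiableAt one_ne_zero).hasDerivAt

theorem ContDiffAt.continuousAt_deriv_deriv (hu : ContDiffAt ℝ 2 u t) :
    ContinuousAt (deriv (deriv u)) t :=
  ((hu.derivWithin (m := 1) (by norm_num)).derivWithin (m := 0) (by norm_num)).continuousAt

theorem ContDiffAt.eventually_hasDerivAt_sq (hu : ContDiffAt ℝ 2 u t) :
    ∀ᶠ s in 𝓝 t, HasDerivAt (fun s => u s ^ 2) (2 * (u s * deriv u s)) s :=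
  hu.eventually_hasDerivAt_deriv.mono fun s hs => by simpa [mul_assoc] using hs.fun_pow 2

theorem ContDiffAt.hasDerivAt_mul_deriv (hu : ContDiffAt ℝ 2 u t) :
    HasDerivAt (fun s => u s * deriv u s) (deriv u t ^ 2 + u t * deriv (deriv u) t) t := by
  simpa [sq] using hu.eventually_hasDerivAt_deriv.self_of_nhds.fun_mul hu.hasDerivAt_deriv_deriv

theorem HasDerivAt.eq_zero_of_eventuallyEq_zero {u' : ℝ} (hu : HasDerivAt u u' t)
    (h₀ : u =ᶠ[𝓝 t] 0) : u' = 0 :=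
  (hu.congr_of_eventuallyEq h₀.symm).unique (hasDerivAt_const t 0)

end SecondDerivative

theorem sq_le_abs_mul_of_sq_eq_sq {a a' a'' b c c' c'' : ℝ} (hc : c ≠ 0) (h₀ : a ^ 2 = c ^ 2)
    (h₁ : a * a' = c * c') (h₂ : a' ^ 2 + a * a'' = b ^ 2 + c' ^ 2 + c * c'') :
    b ^ 2 ≤ |c| * (|a''| + |c''|) := by
  have ha' : a' ^ 2 = c' ^ 2 := by
    have : c ^ 2 * a' ^ 2 = c ^ 2 * c' ^ 2 := by
      linear_combination (a * a' + c * c') * h₁ - a' ^ 2 * h₀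
    exact mul_left_cancel₀ (pow_ne_zero 2 hc) this
  have habs : |a| = |c| := sq_eq_sq_iff_abs_eq_abs a c |>.1 h₀
  calc b ^ 2 = a * a'' - c * c'' := by linarith
    _ ≤ |a| * |a''| + |c| * |c''| := by
      rw [← abs_mul, ← abs_mul]; linarith [le_abs_self (a * a''), neg_abs_le (c * c'')]
    _ = |c| * (|a''| + |c''|) := by rw [habs]; ring

theorem sq_deriv_div_abs_le_of_sq_eq_sq_add_sq {g h e : ℝ → ℝ} {t : ℝ}
    (hg : ContDiffAt ℝ 2 g t) (hh : ContDiffAt ℝ 2 h t) (he : ContDiffAt ℝ 2 e t)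
    (hsq : ∀ᶠ s in 𝓝 t, g s ^ 2 = h s ^ 2 + e s ^ 2) (ht : h t = 0) (het : e t ≠ 0) :
    deriv h t ^ 2 / |e t| ≤ |deriv (deriv g) t| + |deriv (deriv e) t| := by
  -- `D = (g² - h² - e²)' / 2` vanishes near `t`, hence so does its derivative at `t`.
  set D : ℝ → ℝ := fun s => g s * deriv g s - (h s * deriv h s + e s * deriv e s)
  have hD : D =ᶠ[𝓝 t] 0 := by
    filter_upwards [hsq.eventually_nhds, hg.eventually_hasDerivAt_sq,
      hh.eventually_hasDerivAt_sq, he.eventually_hasDerivAt_sq] with s hs hgs hhs hes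
    have h2D := (hgs.sub (hhs.add hes)).eq_zero_of_eventuallyEq_zero
      (hs.mono fun r hr => by simp [hr])
    simp only [D, Pi.zero_apply]
    linarith
  have h₀ := hsq.self_of_nhds
  have h₁ : g t * deriv g t - (h t * deriv h t + e t * deriv e t) = 0 := hD.self_of_nhds
  have h₂ := (hg.hasDerivAt_mul_deriv.sub (hh.hasDerivAt_mul_deriv.add
    he.hasDerivAt_mul_deriv)).eq_zero_of_eventuallyEq_zero hD
  rw [div_le_iff₀' (abs_pos.2 het)]
  exact sq_le_abs_mul_of_sq_eq_sq (a := g t) (a' := deriv g t) (c' := deriv e t) het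
    (by linear_combination h₀ + h t * ht) (by linear_combination h₁ + deriv h t * ht)
    (by linear_combination h₂ + deriv (deriv h) t * ht)

theorem not_exists_contDiffAt_two_sq_eq_sq_add_sq {h e : ℝ → ℝ} (hh : ContDiff ℝ 2 h)
    (he : ContDiff ℝ 2 e) {τ : ℕ → ℝ} {x₀ : ℝ} (hτ : Tendsto τ atTop (𝓝 x₀))
    (hhτ : ∀ k, h (τ k) = 0) (heτ : ∀ k, e (τ k) ≠ 0)
    (hblow : Tendsto (fun k => deriv h (τ k) ^ 2 / |e (τ k)|) atTop atTop) :
    ¬ ∃ g : ℝ → ℝ, ContDiffAt ℝ 2 g x₀ ∧ ∀ᶠ s in 𝓝 x₀, g s ^ 2 = h s ^ 2 + e s ^ 2 := by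
  rintro ⟨g, hg, hsq⟩
  set B := |deriv (deriv g) x₀| + |deriv (deriv e) x₀|
  have hbound : ∀ᶠ s in 𝓝 x₀, |deriv (deriv g) s| + |deriv (deriv e) s| < B + 1 :=
    ((hg.continuousAt_deriv_deriv.abs.add he.contDiffAt.continuousAt_deriv_deriv.abs)
      ).eventually_lt_const (lt_add_one B)
  obtain ⟨k, ⟨hgk, hsqk, hbk⟩, hk⟩ := (hτ.eventually ((hg.eventually (by simp)).and
    (hsq.eventually_nhds.and hbound))).and (hblow.eventually_gt_atTop (B + 1)) |>.exists
  linarith [sq_deriv_div_abs_le_of_sq_eq_sq_add_sq hgk hh.contDiffAt he.contDiffAt hsqk (hhτ k)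
    (heτ k)]

noncomputable def trigGlue (p q : ℝ[X]) (x : ℝ) : ℝ :=
  (p.eval x⁻¹ * sin x⁻¹ + q.eval x⁻¹ * cos x⁻¹) * expNegInvGlue (2 * x)

theorem expNegInvGlue_two_mul_sq (x : ℝ) : expNegInvGlue (2 * x) ^ 2 = expNegInvGlue x := by
  rcases le_or_gt x 0 with hx | hx
  · simp [expNegInvGlue.zero_of_nonpos hx, expNegInvGlue.zero_of_nonpos (by linarith : 2 * x ≤ 0)]
  · rw [expNegInvGlue, expNegInvGlue, if_neg (by linarith), if_neg hx.not_ge, ← exp_nat_mul]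
    congr 1
    field_simp
    norm_num

namespace trigGlue

theorem of_nonpos (p q : ℝ[X]) {x : ℝ} (hx : x ≤ 0) : trigGlue p q x = 0 := by
  rw [trigGlue, expNegInvGlue.zero_of_nonpos (by linarith), mul_zero]

theorem of_pos (p q : ℝ[X]) {x : ℝ} (hx : 0 < x) :
    trigGlue p q x = (p.eval x⁻¹ * sin x⁻¹ + q.eval x⁻¹ * cos x⁻¹) * exp (-x⁻¹ / 2) := by
  rw [trigGlue, expNegInvGlue, if_neg (by linarith), mul_inv, neg_div, div_eq_inv_mul]

theorem tendsto_polynomial_inv_mul_zero (p : ℝ[X]) :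
    Tendsto (fun x => p.eval x⁻¹ * expNegInvGlue (2 * x)) (𝓝 0) (𝓝 0) := by
  have h2 : Tendsto (fun x : ℝ => 2 * x) (𝓝 0) (𝓝 0) := by
    simpa using (continuous_const_mul (2 : ℝ)).tendsto 0
  refine ((expNegInvGlue.tendsto_polynomial_inv_mul_zero (p.comp (C 2 * X))).comp h2).congr
    fun x => ?_
  simp [mul_inv_rev, mul_left_comm (2 : ℝ)]

theorem tendsto_zero (p q : ℝ[X]) : Tendsto (trigGlue p q) (𝓝 0) (𝓝 0) := by
  have h := (tendsto_polynomial_inv_mul_zero p).abs.add (tendsto_polynomial_inv_mul_zero q).abs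
  rw [abs_zero, add_zero] at h
  refine squeeze_zero_norm (fun x => ?_) h
  have hE := expNegInvGlue.nonneg (2 * x)
  rw [Real.norm_eq_abs, trigGlue, abs_mul, abs_of_nonneg hE, abs_mul, abs_mul, abs_of_nonneg hE,
    ← add_mul]
  gcongr
  refine (abs_add_le _ _).trans (add_le_add ?_ ?_) <;> rw [abs_mul]
  · exact mul_le_of_le_one_right (abs_nonneg _) (abs_sin_le_one _)
  · exact mul_le_of_le_one_right (abs_nonneg _) (abs_cos_le_one _)

theorem hasDerivAt (p q : ℝ[X]) (x : ℝ) :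
    HasDerivAt (trigGlue p q) (trigGlue (X ^ 2 * (C (1 / 2) * p - derivative p + q))
      (X ^ 2 * (C (1 / 2) * q - derivative q - p)) x) x := by
  rcases lt_trichotomy x 0 with hx | rfl | hx
  · rw [of_nonpos _ _ hx.le]
    refine (hasDerivAt_const _ 0).congr_of_eventuallyEq ?_
    filter_upwards [gt_mem_nhds hx] with y hy
    rw [of_nonpos _ _ hy.le]
  · rw [of_nonpos _ _ le_rfl, hasDerivAt_iff_tendsto_slope]
    refine ((tendsto_zero (X * p) (X * q)).mono_left inf_le_left).congr fun x => ?_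
    rw [slope_def_field, of_nonpos _ _ le_rfl, sub_zero, sub_zero]
    simp only [trigGlue, eval_mul, eval_X]
    ring
  · have := ((((p.hasDerivAt _).fun_mul (hasDerivAt_sin _)).fun_add ((q.hasDerivAt _).fun_mul
      (hasDerivAt_cos _))).fun_mul ((hasDerivAt_neg _).div_const 2).exp).comp x
      (hasDerivAt_inv hx.ne')
    refine (this.congr_of_eventuallyEq ?_).congr_deriv ?_
    · filter_upwards [lt_mem_nhds hx] with y hy
      exact of_pos _ _ hy
    · simp only [of_pos _ _ hx, eval_mul, eval_add, eval_sub, eval_pow, eval_X, eval_C]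
      field_simp
      ring

theorem contDiff {n : ℕ∞} (p q : ℝ[X]) : ContDiff ℝ n (trigGlue p q) := by
  refine contDiff_all_iff_nat.2 (fun m => ?_) n
  induction m generalizing p q with
  | zero => exact contDiff_zero.2 <| continuous_iff_continuousAt.2 fun x =>
      (hasDerivAt p q x).continuousAt
  | succ m ihm =>
    rw [show ((m + 1 : ℕ) : WithTop ℕ∞) = m + 1 from rfl]
    refine contDiff_succ_iff_deriv.2 ⟨fun x => (hasDerivAt p q x).differentiableAt, by simp, ?_⟩
    rw [funext fun x => (hasDerivAt p q x).deriv]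
    exact ihm _ _

theorem one_zero (x : ℝ) : trigGlue 1 0 x = sin x⁻¹ * expNegInvGlue (2 * x) := by
  simp [trigGlue]

theorem sq_deriv_one_zero {x : ℝ} (hsin : sin x⁻¹ = 0) :
    deriv (trigGlue 1 0) x ^ 2 = x⁻¹ ^ 4 * expNegInvGlue x := by
  have hcos : cos x⁻¹ ^ 2 = 1 := by nlinarith [sin_sq_add_cos_sq x⁻¹]
  rw [(hasDerivAt 1 0 x).deriv, trigGlue, ← expNegInvGlue_two_mul_sq x]
  simp only [eval_mul, eval_sub, eval_add, eval_pow, eval_X, eval_C, eval_one, eval_zero,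
    derivative_one, derivative_zero, hsin]
  linear_combination (x⁻¹ ^ 4 * expNegInvGlue (2 * x) ^ 2) * hcos

end trigGlue

theorem trigGlue_one_zero_sq_add_expNegInvGlue_sq (t : ℝ) :
    trigGlue 1 0 t ^ 2 + expNegInvGlue t ^ 2 =
      if 0 < t then sin (1 / t) ^ 2 * exp (-1 / t) + exp (-2 / t) else 0 := by
  split_ifs with ht
  · rw [trigGlue.one_zero, mul_pow, expNegInvGlue_two_mul_sq, expNegInvGlue,
      if_neg ht.not_ge, ← exp_nat_mul, one_div]
    congr 2 <;> field_simp
    norm_num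
  · simp [trigGlue.of_nonpos _ _ (not_lt.1 ht), expNegInvGlue.zero_of_nonpos (not_lt.1 ht)]

theorem not_exists_contDiffAt_two_sq_eq_trigGlue_sq_add_expNegInvGlue_sq :
    ¬ ∃ g : ℝ → ℝ, ContDiffAt ℝ 2 g 0 ∧
      ∀ᶠ t in 𝓝 0, g t ^ 2 = trigGlue 1 0 t ^ 2 + expNegInvGlue t ^ 2 := by
  set u : ℕ → ℝ := fun k => (k + 1 : ℕ) * π
  have hu : Tendsto u atTop atTop :=
    (tendsto_natCast_atTop_atTop.comp (tendsto_add_atTop_nat 1)).atTop_mul_const pi_pos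
  have hu₀ (k : ℕ) : 0 < u k := by positivity
  have hsin (k : ℕ) : sin (u k)⁻¹⁻¹ = 0 := by rw [inv_inv]; exact sin_nat_mul_pi _
  refine not_exists_contDiffAt_two_sq_eq_sq_add_sq (trigGlue.contDiff 1 0)
    expNegInvGlue.contDiff (tendsto_inv_atTop_zero.comp hu) (fun k => ?_)
    (fun k => (expNegInvGlue.pos_of_pos (inv_pos.2 (hu₀ k))).ne') ?_
  · simp only [Function.comp_apply, trigGlue.one_zero, hsin, zero_mul]
  · refine ((tendsto_pow_atTop four_ne_zero).comp hu).congr fun k => ?_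
    have he := expNegInvGlue.pos_of_pos (inv_pos.2 (hu₀ k))
    simp only [Function.comp_apply, trigGlue.sq_deriv_one_zero (hsin k), abs_of_pos he,
      mul_div_cancel_right₀ _ he.ne', inv_inv]

/-- Warner's example: `f t = sin²(1/t)·e^{-1/t} + e^{-2/t}` for `t > 0`, `f t = 0`
for `t ≤ 0`, is a nonnegative smooth function which is a sum of two nonnegative
smooth functions each admitting a smooth square root, yet `f` admits no `C²`
square root near `0`. -/
theorem no_C2_sqrt_Warner :
    ∃ f f₁ f₂ : ℝ → ℝ,
      (∀ t : ℝ, f t = if 0 < t then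
          Real.sin (1 / t) ^ 2 * Real.exp (-1 / t) + Real.exp (-2 / t) else 0) ∧
      ContDiff ℝ (⊤ : ℕ∞) f ∧ (∀ t, 0 ≤ f t) ∧
      f = f₁ + f₂ ∧
      ContDiff ℝ (⊤ : ℕ∞) f₁ ∧ (∀ t, 0 ≤ f₁ t) ∧
      ContDiff ℝ (⊤ : ℕ∞) f₂ ∧ (∀ t, 0 ≤ f₂ t) ∧
      (∃ g₁ : ℝ → ℝ, ContDiff ℝ (⊤ : ℕ∞) g₁ ∧ ∀ t, g₁ t ^ 2 = f₁ t) ∧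
      (∃ g₂ : ℝ → ℝ, ContDiff ℝ (⊤ : ℕ∞) g₂ ∧ ∀ t, g₂ t ^ 2 = f₂ t) ∧
      ¬ ∃ g : ℝ → ℝ, ContDiffAt ℝ 2 g 0 ∧ ∀ᶠ t in nhds (0 : ℝ), g t ^ 2 = f t := by
  have hh : ContDiff ℝ (⊤ : ℕ∞) (trigGlue 1 0) := trigGlue.contDiff 1 0
  have he : ContDiff ℝ (⊤ : ℕ∞) expNegInvGlue := expNegInvGlue.contDiff
  exact ⟨fun t => trigGlue 1 0 t ^ 2 + expNegInvGlue t ^ 2, fun t => trigGlue 1 0 t ^ 2,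
    fun t => expNegInvGlue t ^ 2, trigGlue_one_zero_sq_add_expNegInvGlue_sq,
    (hh.pow 2).add (he.pow 2), fun t => by positivity, rfl, hh.pow 2, fun t => sq_nonneg _,
    he.pow 2, fun t => sq_nonneg _, ⟨_, hh, fun t => rfl⟩,
    ⟨_, he, fun t => rfl⟩, not_exists_contDiffAt_two_sq_eq_trigGlue_sq_add_expNegInvGlue_sq⟩
end

section
/- There exists a nonnegative smooth function f : ℝ → ℝ such that no function g that is C² on an open interval containing the closure of the zero set accumulation point satisfies g² = f; explicitly, for f(t) = Σₙ hₙ(t−tₙ)·((2n/2ⁿ)(t−tₙ)² + 4^{−n}) with suitable bump functions hₙ and points tₙ converging to a finite limit, any g with g² = f near lim tₙ satisfies g''(tₙ) = ±2n, so g is not C². -/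
/-!
Put rescaled bumps at the points `cₙ = 1/(n+1) → 0`, with disjoint supports of radius `rₙ`, so
that near `cₙ` the function is `f t = (wₙ / rₙ²) (t - cₙ)² + wₙ²` with `wₙ = 2⁻ⁿ`. Since `wₙ` decays
faster than any power of `rₙ⁻¹ ≍ n²`, the series of bumps converges in every `Cᵏ`, so `f` is smooth.
If `g² = f` with `g` twice differentiable near `cₙ`, then `g(cₙ) = ±wₙ`, `g'(cₙ) = 0` and
`g(cₙ) g''(cₙ) = wₙ / rₙ²`, hence `|g''(cₙ)| = rₙ⁻² → ∞`: the small constant term `wₙ²` is what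
makes the square root curve sharply. So `g''` cannot be continuous at `0`.
-/

open Filter Topology
open scoped ContDiff

lemma iteratedDeriv_comp_sub_div {k : ℕ} {φ : ℝ → ℝ} (hφ : ContDiff ℝ k φ) (s d : ℝ) :
    iteratedDeriv k (fun t => φ ((t - s) / d)) =
      fun t => d⁻¹ ^ k * iteratedDeriv k φ ((t - s) / d) := by
  simp_rw [div_eq_inv_mul]
  rw [iteratedDeriv_comp_sub_const k (fun z => φ (d⁻¹ * z)), iteratedDeriv_comp_const_mul hφ]

lemma HasCompactSupport.exists_bound_iteratedDeriv {φ : ℝ → ℝ} (hφc : HasCompactSupport φ)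
    {k : ℕ} (hφ : ContDiff ℝ k φ) : ∃ M, ∀ y, ‖iteratedDeriv k φ y‖ ≤ M := by
  obtain ⟨M, hM⟩ := (hφ.continuous_iteratedFDeriv le_rfl).bounded_above_of_compact_support
    (hφc.iteratedFDeriv k)
  exact ⟨M, fun y => by rw [← norm_iteratedFDeriv_eq_norm_iteratedDeriv]; exact hM y⟩

noncomputable def bumpSeries (φ : ℝ → ℝ) (c s d : ℕ → ℝ) (t : ℝ) : ℝ :=
  ∑' n, c n * φ ((t - s n) / d n)

theorem contDiff_bumpSeries {φ : ℝ → ℝ} (hφ : ContDiff ℝ ∞ φ) (hφc : HasCompactSupport φ)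
    {c s d : ℕ → ℝ} (hsum : ∀ k : ℕ, Summable fun n => |c n| * |d n|⁻¹ ^ k) :
    ContDiff ℝ ∞ (bumpSeries φ c s d) := by
  have hφk (k : ℕ) : ContDiff ℝ k φ := hφ.of_le (by exact_mod_cast le_top)
  choose M hM using fun k => hφc.exists_bound_iteratedDeriv (hφk k)
  refine contDiff_tsum (v := fun k n => |c n| * |d n|⁻¹ ^ k * M k)
    (fun n => contDiff_const.mul (hφ.comp (by fun_prop)))
    (fun k _ => (hsum k).mul_right _) fun k n t _ => ?_
  rw [norm_iteratedFDeriv_eq_norm_iteratedDeriv, iteratedDeriv_const_mul_field,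
    iteratedDeriv_comp_sub_div (hφk k), norm_mul, norm_mul,
    norm_pow, norm_inv, Real.norm_eq_abs, Real.norm_eq_abs, mul_assoc]
  gcongr
  exact hM k _

theorem bumpSeries_eq_of_forall_ne {φ : ℝ → ℝ} (hφ : ∀ y, 1 ≤ |y| → φ y = 0)
    {c s d : ℕ → ℝ} (hd : ∀ n, 0 < d n) {n : ℕ} {t : ℝ} (ht : ∀ m ≠ n, d m ≤ |t - s m|) :
    bumpSeries φ c s d t = c n * φ ((t - s n) / d n) := by
  refine tsum_eq_single n fun m hm => ?_
  rw [hφ _ (by rw [abs_div, abs_of_pos (hd m), one_le_div (hd m)]; exact ht m hm), mul_zero]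

theorem bumpSeries_nonneg {φ : ℝ → ℝ} (hφ : ∀ y, 0 ≤ φ y) {c s d : ℕ → ℝ} (hc : ∀ n, 0 ≤ c n)
    (t : ℝ) : 0 ≤ bumpSeries φ c s d t :=
  tsum_nonneg fun n => mul_nonneg (hc n) (hφ _)

theorem abs_deriv_deriv_of_sq_eventuallyEq {g : ℝ → ℝ} {s A a : ℝ} (ha : a ≠ 0)
    (hg : ContDiffAt ℝ 2 g s) (h : ∀ᶠ t in 𝓝 s, g t ^ 2 = A * (t - s) ^ 2 + a ^ 2) :
    |deriv (deriv g) s| = |A| / |a| := by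
  have hg' : ContDiffAt ℝ 1 (deriv g) s := hg.derivWithin (by norm_num)
  have hdiff : ∀ᶠ t in 𝓝 s, DifferentiableAt ℝ g t :=
    (hg.eventually (by simp)).mono fun t ht => ht.differentiableAt (by norm_num)
  have hgs : g s ^ 2 = a ^ 2 := by simpa using h.self_of_nhds
  have hgs0 : g s ≠ 0 := fun h0 => pow_ne_zero 2 ha (by rw [← hgs, h0, zero_pow two_ne_zero])
  have hderiv : (fun t => 2 * g t * deriv g t) =ᶠ[𝓝 s] fun t => 2 * A * (t - s) := by
    filter_upwards [EventuallyEq.deriv h, hdiff] with t ht hdt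
    have hl : HasDerivAt (fun t => g t ^ 2) (2 * g t * deriv g t) t := by
      simpa using hdt.hasDerivAt.fun_pow 2
    have hr : HasDerivAt (fun t => A * (t - s) ^ 2 + a ^ 2) (2 * A * (t - s)) t := by
      simpa [mul_comm, mul_assoc, mul_left_comm] using
        (((hasDerivAt_id t).sub_const s).pow 2).const_mul A |>.add_const (a ^ 2)
    rw [← hl.deriv, ← hr.deriv, ht]
  have hg's : deriv g s = 0 := by
    simpa [hgs0] using hderiv.self_of_nhds
  have hleft : HasDerivAt (fun t => 2 * g t * deriv g t)
      (2 * deriv g s * deriv g s + 2 * g s * deriv (deriv g) s) s :=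
    ((hg.differentiableAt (by norm_num)).hasDerivAt.const_mul 2).mul
      (hg'.differentiableAt one_ne_zero).hasDerivAt
  have hright : HasDerivAt (fun t => 2 * A * (t - s)) (2 * A) s := by
    simpa using ((hasDerivAt_id s).sub_const s).const_mul (2 * A)
  have hprod : g s * deriv (deriv g) s = A := by
    have := hleft.unique (hright.congr_of_eventuallyEq hderiv)
    rw [hg's] at this
    linarith
  have habs : |g s| = |a| := sq_eq_sq_iff_abs_eq_abs _ _ |>.1 hgs
  rw [← hprod, abs_mul, habs, mul_div_cancel_left₀ _ (abs_ne_zero.2 ha)]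

namespace NoC2Sqrt

noncomputable def center (n : ℕ) : ℝ := ((n : ℝ) + 1)⁻¹

noncomputable def radius (n : ℕ) : ℝ := (2 * ((n : ℝ) + 1) * ((n : ℝ) + 2))⁻¹

noncomputable def weight (n : ℕ) : ℝ := 2⁻¹ ^ n

noncomputable def cutoff : ContDiffBump (0 : ℝ) := ⟨1 / 2, 1, by norm_num, by norm_num⟩

noncomputable def f : ℝ → ℝ :=
  bumpSeries (fun y => cutoff y * y ^ 2) weight center radius +
    bumpSeries cutoff (fun n => weight n ^ 2) center radius

lemma radius_pos (n : ℕ) : 0 < radius n := by unfold radius; positivity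

lemma weight_pos (n : ℕ) : 0 < weight n := by unfold weight; positivity

lemma radius_antitone : Antitone radius := fun m n h => by
  have : (m : ℝ) ≤ n := by exact_mod_cast h
  unfold radius
  gcongr

lemma center_antitone : Antitone center := fun m n h => by
  have : (m : ℝ) ≤ n := by exact_mod_cast h
  unfold center
  gcongr

lemma center_sub_center_succ (n : ℕ) : center n - center (n + 1) = 2 * radius n := by
  unfold center radius
  push_cast
  field_simp
  ring

lemma radius_add_radius_le {m n : ℕ} (h : m < n) : radius m + radius n ≤ center m - center n := by
  linarith [radius_antitone h.le, center_sub_center_succ m, center_antitone (Nat.succ_le_of_lt h)]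

lemma radius_le_abs_sub_center {m n : ℕ} (hmn : m ≠ n) {t : ℝ} (ht : |t - center n| < radius n) :
    radius m ≤ |t - center m| := by
  rw [abs_lt] at ht
  rcases hmn.lt_or_gt with h | h
  · have := radius_add_radius_le h
    rw [abs_sub_comm]
    exact le_abs.2 (Or.inl (by linarith))
  · have := radius_add_radius_le h
    exact le_abs.2 (Or.inl (by linarith))

lemma cutoff_eq_zero {y : ℝ} (hy : 1 ≤ |y|) : cutoff y = 0 :=
  cutoff.zero_of_le_dist (by simpa [cutoff] using hy)

lemma cutoff_eq_one {y : ℝ} (hy : |y| ≤ 1 / 2) : cutoff y = 1 :=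
  cutoff.one_of_mem_closedBall (by simpa [cutoff] using hy)

lemma f_eq {n : ℕ} {t : ℝ} (ht : |t - center n| ≤ radius n / 2) :
    f t = weight n / radius n ^ 2 * (t - center n) ^ 2 + weight n ^ 2 := by
  have hr := radius_pos n
  have hfar : ∀ m ≠ n, radius m ≤ |t - center m| :=
    fun m hm => radius_le_abs_sub_center hm (by linarith)
  have hone : cutoff ((t - center n) / radius n) = 1 := by
    refine cutoff_eq_one ?_
    rw [abs_div, abs_of_pos hr, div_le_iff₀ hr]
    linarith
  simp only [f, Pi.add_apply]
  rw [bumpSeries_eq_of_forall_ne (fun y hy => by simp [cutoff_eq_zero hy]) radius_pos hfar,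
    bumpSeries_eq_of_forall_ne (fun y hy => cutoff_eq_zero hy) radius_pos hfar, hone]
  field_simp

lemma eventually_f_eq (n : ℕ) :
    ∀ᶠ t in 𝓝 (center n), f t = weight n / radius n ^ 2 * (t - center n) ^ 2 + weight n ^ 2 := by
  filter_upwards [Metric.closedBall_mem_nhds _ (half_pos (radius_pos n))] with t ht
  exact f_eq ht

lemma summable_weight_mul_inv_radius_pow (k : ℕ) :
    Summable fun n => |weight n| * |radius n|⁻¹ ^ k := by
  have hgeom : Summable fun n : ℕ => ((n : ℝ) + 2) ^ (2 * k) * 2⁻¹ ^ n := by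
    have := ((summable_nat_add_iff 2).2 (summable_pow_mul_geometric_of_norm_lt_one (2 * k)
      (r := (2⁻¹ : ℝ)) (by norm_num))).mul_left 4
    refine this.congr fun n => ?_
    push_cast
    rw [pow_add]
    ring
  refine (hgeom.mul_left (2 ^ k)).of_nonneg_of_le (fun n => by positivity) fun n => ?_
  rw [abs_of_pos (weight_pos n), abs_of_pos (radius_pos n), radius, inv_inv, weight, pow_mul,
    ← mul_assoc, ← mul_pow, mul_comm]
  gcongr ?_ ^ k * _
  nlinarith

lemma contDiff_f : ContDiff ℝ ∞ f := by
  refine (contDiff_bumpSeries (cutoff.contDiff.mul (contDiff_id.pow 2))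
    (cutoff.hasCompactSupport.mul_right) summable_weight_mul_inv_radius_pow).add
    (contDiff_bumpSeries cutoff.contDiff cutoff.hasCompactSupport fun k => ?_)
  refine (summable_weight_mul_inv_radius_pow k).of_nonneg_of_le (fun n => by positivity)
    fun n => ?_
  have hw := weight_pos n
  have hw1 : weight n ≤ 1 := pow_le_one₀ (by norm_num) (by norm_num)
  rw [abs_of_pos (pow_pos hw 2), abs_of_pos hw]
  gcongr
  nlinarith

lemma f_nonneg (t : ℝ) : 0 ≤ f t :=
  add_nonneg (bumpSeries_nonneg (fun y => mul_nonneg cutoff.nonneg (sq_nonneg y))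
      (fun n => (weight_pos n).le) t)
    (bumpSeries_nonneg (fun _ => cutoff.nonneg) (fun _ => sq_nonneg _) t)

lemma tendsto_center : Tendsto center atTop (𝓝 0) :=
  tendsto_inv_atTop_zero.comp (tendsto_atTop_add_const_right _ 1 tendsto_natCast_atTop_atTop)

lemma tendsto_inv_radius_sq : Tendsto (fun n => (radius n)⁻¹ ^ 2) atTop atTop := by
  refine tendsto_atTop_mono (fun n => ?_) tendsto_natCast_atTop_atTop
  have : (0 : ℝ) ≤ n := n.cast_nonneg
  rw [radius, inv_inv]
  nlinarith [sq_nonneg ((n:ℝ) + 1)]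

end NoC2Sqrt

open NoC2Sqrt in
/-- Example 2.4: there exists a nonnegative smooth function `f : ℝ → ℝ` and a
point `t₀` such that no function `g` with `g² = f` near `t₀` is `C²` at `t₀`. -/
theorem exists_smooth_nonneg_no_C2_sqrt :
    ∃ (f : ℝ → ℝ) (t₀ : ℝ),
      ContDiff ℝ (⊤ : ℕ∞) f ∧ (∀ t, 0 ≤ f t) ∧
      ∀ g : ℝ → ℝ, (∀ᶠ t in nhds t₀, g t ^ 2 = f t) → ¬ ContDiffAt ℝ 2 g t₀ := by
  refine ⟨f, 0, contDiff_f, f_nonneg, fun g hg hC2 => ?_⟩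
  have hblowup : ∀ᶠ n in atTop, |deriv (deriv g) (center n)| = (radius n)⁻¹ ^ 2 := by
    filter_upwards [tendsto_center.eventually (eventually_eventually_nhds.2 hg),
      tendsto_center.eventually (hC2.eventually (by simp))] with n hgn hC2n
    have hsq : ∀ᶠ t in 𝓝 (center n),
        g t ^ 2 = weight n / radius n ^ 2 * (t - center n) ^ 2 + weight n ^ 2 := by
      filter_upwards [hgn, eventually_f_eq n] with t h1 h2
      rw [h1, h2]
    rw [abs_deriv_deriv_of_sq_eventuallyEq (weight_pos n).ne' hC2n hsq,
      abs_of_pos (weight_pos n), abs_of_pos (div_pos (weight_pos n) (pow_pos (radius_pos n) 2))]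
    field_simp [(weight_pos n).ne']
  have hcont : ContinuousAt (deriv (deriv g)) 0 :=
    ((hC2.derivWithin (m := 1) (by norm_num)).derivWithin (m := 0) (by norm_num)).continuousAt
  exact not_tendsto_atTop_of_tendsto_nhds (hcont.tendsto.comp tendsto_center).abs
    (tendsto_inv_radius_sq.congr' (hblowup.mono fun _ h => h.symm))
end

section
/- For n real numbers x₁,…,xₙ, the determinant of the k×k Bezoutiant minor B_k = (s_{i+j})_{0≤i,j<k}, where s_m = Σⱼ xⱼ^m are the power sums, equals Σ_{i₁<…<i_k} ∏_{a<b} (x_{i_a} − x_{i_b})². -/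
/-!
The Bezoutiant minor factors as `B_k = V * Vᵀ` with `V` the `k × n` matrix `(x_l ^ i)`. By the
Cauchy–Binet formula, `det (V * Vᵀ)` is the sum over `k`-subsets `S` of `det (V_S) ^ 2`, and the
column-restriction `V_S` is a transposed Vandermonde matrix, whose determinant is
`∏_{a < b in S} (x_b - x_a)`.

Cauchy–Binet comes from expanding `det (A * B)` multilinearly in the rows: this gives a sum over
maps `p : Fin k → m`; a non-injective `p` produces a repeated row, and the injective `p` with
image `S` are exactly the increasing enumeration of `S` composed with a permutation.
-/

open Finset Matrix Equiv

namespace Finset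

theorem sum_image_eq_sum_perm_orderEmbOfFin {m M : Type*} [LinearOrder m] [Fintype m]
    [AddCommMonoid M] {k : ℕ} (S : Finset m) (hS : #S = k) (f : (Fin k → m) → M) :
    ∑ p with univ.image p = S, f p = ∑ σ : Perm (Fin k), f (S.orderEmbOfFin hS ∘ σ) := by
  set e := S.orderEmbOfFin hS
  symm
  refine sum_bij (fun σ _ => e ∘ σ) (fun σ _ => ?_) (fun σ _ τ _ h => ?_) (fun p hp => ?_)
    (fun _ _ => rfl)
  · rw [mem_filter, ← image_image, image_univ_equiv, image_orderEmbOfFin_univ]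
    exact ⟨mem_univ _, rfl⟩
  · exact Equiv.ext fun i => e.injective (congrFun h i)
  · obtain ⟨-, himage⟩ := mem_filter.1 hp
    have hpS (i : Fin k) : p i ∈ S := himage ▸ mem_image_of_mem p (mem_univ i)
    have hpinj : Set.InjOn p (univ : Finset (Fin k)) :=
      card_image_iff.1 (by rw [himage, hS, card_univ, Fintype.card_fin])
    set σ : Fin k → Fin k := fun i => (S.orderIsoOfFin hS).symm ⟨p i, hpS i⟩
    have heσ (i : Fin k) : e (σ i) = p i := by
      simp [e, σ, ← coe_orderIsoOfFin_apply]
    have hσ : Function.Bijective σ := Finite.injective_iff_bijective.1 fun i j h =>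
      hpinj (mem_univ i) (mem_univ j) (by rw [← heσ, h, heσ])
    exact ⟨Equiv.ofBijective σ hσ, mem_univ _, funext heσ⟩

theorem map_prodMap_filter_lt_orderEmbOfFin {m : Type*} [LinearOrder m] {k : ℕ}
    (S : Finset m) (hS : #S = k) :
    (univ.filter fun q : Fin k × Fin k => q.1 < q.2).map
        ((S.orderEmbOfFin hS).toEmbedding.prodMap (S.orderEmbOfFin hS).toEmbedding) =
      S.offDiag.filter fun p => p.1 < p.2 := by
  set e := S.orderEmbOfFin hS
  have hmem (a : m) : a ∈ S ↔ ∃ i, e i = a := by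
    rw [← mem_coe, ← range_orderEmbOfFin S hS, Set.mem_range]
  ext ⟨a, b⟩
  simp only [mem_map, mem_filter, mem_univ, true_and, mem_offDiag, hmem, Prod.exists,
    Function.Embedding.coe_prodMap, Prod.map_apply, Prod.mk.injEq]
  constructor
  · rintro ⟨i, j, hij, rfl, rfl⟩
    exact ⟨⟨⟨i, rfl⟩, ⟨j, rfl⟩, (e.strictMono hij).ne⟩, e.strictMono hij⟩
  · rintro ⟨⟨⟨i, rfl⟩, ⟨j, rfl⟩, -⟩, hij⟩
    exact ⟨i, j, e.lt_iff_lt.1 hij, rfl, rfl⟩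

theorem prod_offDiag_filter_lt_eq_prod_orderEmbOfFin {m M : Type*} [LinearOrder m]
    [CommMonoid M] {k : ℕ} (S : Finset m) (hS : #S = k) (f : m × m → M) :
    ∏ p ∈ S.offDiag.filter (fun p => p.1 < p.2), f p =
      ∏ i, ∏ j ∈ Ioi i, f (S.orderEmbOfFin hS i, S.orderEmbOfFin hS j) := by
  rw [← map_prodMap_filter_lt_orderEmbOfFin S hS, prod_map,
    prod_finset_product _ univ Ioi (by simp)]
  rfl

end Finset

namespace Matrix

variable {R m n : Type*} [CommRing R] [Fintype n] [DecidableEq n]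

theorem det_mul_eq_sum_prod_mul_det_submatrix [Fintype m] (A : Matrix n m R)
    (B : Matrix m n R) :
    (A * B).det = ∑ p : n → m, (∏ i, A i (p i)) * (B.submatrix p id).det := by
  have hrows : A * B = fun i => ∑ l, A i l • B l := by
    ext i j
    simp [mul_apply, Finset.sum_apply]
  rw [hrows]
  exact (detRowAlternating.toMultilinearMap.map_sum _).trans
    (sum_congr rfl fun p _ => detRowAlternating.map_smul_univ _ _)

theorem det_submatrix_of_not_injective {p : n → m} (hp : ¬ Function.Injective p)
    (B : Matrix m n R) : (B.submatrix p id).det = 0 := by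
  obtain ⟨i, j, hpij, hij⟩ : ∃ i j, p i = p j ∧ i ≠ j := by
    simpa [Function.Injective] using hp
  exact det_zero_of_row_eq hij (funext fun l => by simp [hpij])

theorem sum_perm_prod_mul_det_submatrix_comp (A : Matrix n m R) (B : Matrix m n R)
    (e : n → m) :
    ∑ σ : Perm n, (∏ i, A i (e (σ i))) * (B.submatrix (e ∘ σ) id).det =
      (A.submatrix id e).det * (B.submatrix e id).det := by
  have hperm (σ : Perm n) :
      (B.submatrix (e ∘ σ) id).det = Perm.sign σ * (B.submatrix e id).det :=
    det_permute σ (B.submatrix e id)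
  simp only [hperm, ← mul_assoc, ← sum_mul]
  congr 1
  rw [← det_transpose, det_apply']
  exact sum_congr rfl fun σ _ => mul_comm _ _

theorem det_mul_eq_sum_det_submatrix_orderEmbOfFin [Fintype m] [LinearOrder m] {k : ℕ}
    (A : Matrix (Fin k) m R) (B : Matrix m (Fin k) R) :
    (A * B).det = ∑ S : {S : Finset m // #S = k},
      (A.submatrix id (S.1.orderEmbOfFin S.2)).det *
        (B.submatrix (S.1.orderEmbOfFin S.2) id).det := by
  set F : (Fin k → m) → R := fun p => (∏ i, A i (p i)) * (B.submatrix p id).det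
  have hfiber (S : Finset m) (hS : #S ≠ k) : ∑ p with univ.image p = S, F p = 0 := by
    refine sum_eq_zero fun p hp => ?_
    have hp : ¬ Function.Injective p := fun hinj => hS <| by
      rw [← (mem_filter.1 hp).2, card_image_of_injective _ hinj, card_univ, Fintype.card_fin]
    simp only [F, det_submatrix_of_not_injective hp, mul_zero]
  calc (A * B).det = ∑ S : Finset m, ∑ p with univ.image p = S, F p := by
        rw [det_mul_eq_sum_prod_mul_det_submatrix, sum_fiberwise]
    _ = ∑ S with #S = k, ∑ p with univ.image p = S, F p :=
        (sum_filter_of_ne fun S _ hS => not_imp_comm.1 (hfiber S) hS).symm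
    _ = ∑ S : {S : Finset m // #S = k}, ∑ p with univ.image p = S.1, F p :=
        sum_subtype _ (by simp) _
    _ = _ := sum_congr rfl fun S _ => (sum_image_eq_sum_perm_orderEmbOfFin S.1 S.2 F).trans
        (sum_perm_prod_mul_det_submatrix_comp A B _)

theorem det_mul_transpose_eq_sum_sq_det_submatrix [Fintype m] [LinearOrder m] {k : ℕ}
    (A : Matrix (Fin k) m R) :
    (A * Aᵀ).det =
      ∑ S : {S : Finset m // #S = k}, (A.submatrix id (S.1.orderEmbOfFin S.2)).det ^ 2 := by
  simp only [det_mul_eq_sum_det_submatrix_orderEmbOfFin, ← transpose_submatrix, det_transpose, sq]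

theorem det_vandermonde_sq {k : ℕ} (v : Fin k → R) :
    (vandermonde v).det ^ 2 = ∏ i, ∏ j ∈ Ioi i, (v i - v j) ^ 2 := by
  simp only [det_vandermonde, ← prod_pow, sub_sq_comm]

end Matrix

theorem det_bezoutiant_minor_general (n k : ℕ) (x : Fin n → ℝ) :
    Matrix.det (Matrix.of fun i j : Fin k => ∑ l : Fin n, x l ^ ((i : ℕ) + (j : ℕ))) =
      ∑ S ∈ Finset.powersetCard k (Finset.univ : Finset (Fin n)),
        ∏ p ∈ S.offDiag.filter (fun p => p.1 < p.2), (x p.1 - x p.2) ^ 2 := by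
  set V : Matrix (Fin k) (Fin n) ℝ := of fun i l => x l ^ (i : ℕ)
  have hB : (of fun i j : Fin k => ∑ l, x l ^ ((i : ℕ) + (j : ℕ))) = V * Vᵀ := by
    ext i j
    simp [V, mul_apply, pow_add]
  rw [hB, det_mul_transpose_eq_sum_sq_det_submatrix,
    sum_subtype _ (fun S => mem_powersetCard_univ)]
  refine sum_congr rfl fun S _ => ?_
  have hVS : V.submatrix id (S.1.orderEmbOfFin S.2) =
      (vandermonde (x ∘ S.1.orderEmbOfFin S.2))ᵀ := rfl
  rw [hVS, det_transpose, det_vandermonde_sq,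
    prod_offDiag_filter_lt_eq_prod_orderEmbOfFin S.1 S.2]
  rfl

/-- The determinant of the `k × k` Bezoutiant minor `B_k = (s_{i+j})_{0 ≤ i,j < k}`,
where `s_m = Σⱼ xⱼ^m`, equals the sum over `k`-element subsets of the squared
Vandermonde products of the corresponding roots. -/
theorem det_bezoutiant_minor (n k : ℕ) (x : Fin n → ℝ) (hk : k ≤ n) :
    Matrix.det (Matrix.of fun i j : Fin k => ∑ l : Fin n, x l ^ ((i : ℕ) + (j : ℕ))) =
      ∑ S ∈ Finset.powersetCard k (Finset.univ : Finset (Fin n)),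
        ∏ p ∈ S.offDiag.filter (fun p => p.1 < p.2), (x p.1 - x p.2) ^ 2 :=
  det_bezoutiant_minor_general n k x
end

section
/- A monic real polynomial P of degree n has all roots real if and only if the Bezoutiant matrix B(P) = (s_{i+j}(P))_{0≤i,j<n}, whose entries are the power sums of the roots expressed in the coefficients, is positive semidefinite. -/
/-!
For `x : Fin n → ℝ` put `f = ∑ xᵢ Xⁱ`; the quadratic form of the Bezoutiant at `x` is
`Re ∑_{w root} f(w)²`. If all roots are real, every term is a square. If a root `z` is not
real, Lagrange interpolation gives `g : ℂ[X]` of degree `< n` with `g(z) = i` vanishing on the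
other roots; its real part `f = (g + ḡ) / 2` is purely imaginary on the (conjugation-stable)
set of roots with `f(z) = i / 2`, so the form is `-∑ (Im f(w))² ≤ -1/4`.
-/

open Polynomial ComplexConjugate Matrix

def bezoutiant (n : ℕ) (R : Multiset ℂ) : Matrix (Fin n) (Fin n) ℝ :=
  Matrix.of fun i j => ((R.map fun z => z ^ ((i : ℕ) + (j : ℕ))).sum).re

theorem Complex.re_multisetSum_map {ι : Type*} (s : Multiset ι) (f : ι → ℂ) :
    (s.map f).sum.re = (s.map fun i => (f i).re).sum := by
  simpa [Multiset.map_map] using map_multiset_sum Complex.reAddGroupHom (s.map f)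

section

variable {n : ℕ}

theorem bezoutiant_isHermitian (R : Multiset ℂ) : (bezoutiant n R).IsHermitian := by
  ext i j
  simp [bezoutiant, add_comm]

theorem dotProduct_bezoutiant_mulVec (R : Multiset ℂ) (x : Fin n → ℝ) :
    x ⬝ᵥ bezoutiant n R *ᵥ x =
      (R.map fun w => ((∑ i, (x i : ℂ) * w ^ (i : ℕ)) ^ 2).re).sum := by
  have hsq (w : ℂ) : ((∑ i, (x i : ℂ) * w ^ (i : ℕ)) ^ 2).re =
      ∑ i, ∑ j : Fin n, x i * ((w ^ ((i : ℕ) + j)).re * x j) := by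
    rw [sq, Finset.sum_mul_sum, Complex.re_sum]
    refine Finset.sum_congr rfl fun i _ => ?_
    rw [Complex.re_sum]
    refine Finset.sum_congr rfl fun j _ => ?_
    rw [pow_add, ← Complex.re_mul_ofReal, ← Complex.re_ofReal_mul]
    ring_nf
  simp only [hsq, Multiset.sum_map_sum, dotProduct, mulVec, bezoutiant, Matrix.of_apply,
    Complex.re_multisetSum_map, Finset.mul_sum, Multiset.sum_map_mul_left,
    Multiset.sum_map_mul_right]

theorem bezoutiant_posSemidef_of_forall_im_eq_zero {R : Multiset ℂ} (hR : ∀ w ∈ R, w.im = 0) :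
    (bezoutiant n R).PosSemidef := by
  refine .of_dotProduct_mulVec_nonneg (bezoutiant_isHermitian R) fun x => ?_
  rw [star_trivial, dotProduct_bezoutiant_mulVec]
  refine Multiset.sum_nonneg fun t ht => ?_
  obtain ⟨w, hw, rfl⟩ := Multiset.mem_map.mp ht
  obtain ⟨r, rfl⟩ : ∃ r : ℝ, (r : ℂ) = w := ⟨w.re, Complex.ext rfl (hR w hw).symm⟩
  norm_cast
  positivity

theorem sum_re_coeff_mul_pow {g : ℂ[X]} (hg : g.natDegree < n) (w : ℂ) :
    ∑ i : Fin n, ((g.coeff i).re : ℂ) * w ^ (i : ℕ) =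
      (g.eval w + conj (g.eval (conj w))) / 2 := by
  rw [eval_eq_sum_range' hg, eval_eq_sum_range' hg, map_sum, ← Finset.sum_add_distrib,
    Finset.sum_div, Fin.sum_univ_eq_sum_range (fun i => ((g.coeff i).re : ℂ) * w ^ i)]
  refine Finset.sum_congr rfl fun i _ => ?_
  rw [Complex.re_eq_add_conj, map_mul, map_pow, Complex.conj_conj]
  ring

theorem exists_natDegree_lt_eval_eq_and_eval_eq_zero {F : Type*} [Field F] {T : Finset F}
    {z : F} (hz : z ∈ T) (hT : T.card ≤ n) (c : F) :
    ∃ g : F[X], g.natDegree < n ∧ g.eval z = c ∧ ∀ w ∈ T, w ≠ z → g.eval w = 0 := by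
  classical
  have hinj : Set.InjOn id (T : Set F) := Set.injOn_id _
  refine ⟨C c * Lagrange.basis T id z, ?_, ?_, fun w hw hwz => ?_⟩
  · calc _ ≤ (Lagrange.basis T id z).natDegree := natDegree_C_mul_le _ _
      _ = T.card - 1 := Lagrange.natDegree_basis hinj hz
      _ < n := by have := Finset.card_pos.2 ⟨z, hz⟩; omega
  · have hbasis : (Lagrange.basis T id z).eval z = 1 := Lagrange.eval_basis_self hinj hz
    simp [hbasis]
  · have hbasis : (Lagrange.basis T id z).eval w = 0 :=
      Lagrange.eval_basis_of_ne (v := id) hwz.symm hw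
    simp [hbasis]

theorem not_bezoutiant_posSemidef_of_im_ne_zero {R : Multiset ℂ}
    (hconj : ∀ w ∈ R, conj w ∈ R) (hcard : R.toFinset.card ≤ n) {z : ℂ} (hz : z ∈ R)
    (him : z.im ≠ 0) : ¬ (bezoutiant n R).PosSemidef := by
  intro hpsd
  obtain ⟨g, hdeg, hgz, hg0⟩ :=
    exists_natDegree_lt_eval_eq_and_eval_eq_zero (Multiset.mem_toFinset.2 hz) hcard Complex.I
  set f : ℂ → ℂ := fun w => (g.eval w + conj (g.eval (conj w))) / 2 with hf
  have hg_re (w) (hw : w ∈ R) : (g.eval w).re = 0 := by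
    rcases eq_or_ne w z with rfl | hwz
    · simp [hgz]
    · simp [hg0 w (Multiset.mem_toFinset.2 hw) hwz]
  have hf_re (w) (hw : w ∈ R) : (f w).re = 0 := by
    simp [hf, hg_re w hw, hg_re _ (hconj w hw)]
  have hfz : f z = Complex.I / 2 := by
    have hzc : conj z ≠ z := fun h => him (Complex.conj_eq_iff_im.mp h)
    simp [hf, hgz, hg0 _ (Multiset.mem_toFinset.2 (hconj z hz)) hzc]
  have hform := hpsd.dotProduct_mulVec_nonneg fun i => (g.coeff i).re
  simp only [star_trivial, dotProduct_bezoutiant_mulVec, sum_re_coeff_mul_pow hdeg] at hform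
  have hneg : (R.map fun w => (f w ^ 2).re).sum = -(R.map fun w => (f w).im ^ 2).sum := by
    rw [← Multiset.sum_map_neg]
    exact congrArg _ (Multiset.map_congr rfl fun w hw => by simp [sq, hf_re w hw])
  have hle : (f z).im ^ 2 ≤ (R.map fun w => (f w).im ^ 2).sum :=
    Multiset.single_le_sum (by simp [sq_nonneg]) _ (Multiset.mem_map_of_mem _ hz)
  rw [hfz] at hle
  norm_num at hle
  linarith

end

theorem conj_mem_roots_map_algebraMap {P : ℝ[X]} {w : ℂ}
    (hw : w ∈ (P.map (algebraMap ℝ ℂ)).roots) :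
    conj w ∈ (P.map (algebraMap ℝ ℂ)).roots := by
  rw [mem_roots', IsRoot.def, eval_map_algebraMap] at hw ⊢
  rw [aeval_conj, hw.2, map_zero]
  exact ⟨hw.1, rfl⟩

theorem roots_real_iff_bezoutiant_posSemidef_general (n : ℕ)
    (P : Polynomial ℝ) (hdeg : P.natDegree = n) :
    (∀ z ∈ (P.map (algebraMap ℝ ℂ)).roots, z.im = 0) ↔
      (Matrix.of fun i j : Fin n =>
        (((P.map (algebraMap ℝ ℂ)).roots.map
          (fun z => z ^ ((i : ℕ) + (j : ℕ)))).sum).re).PosSemidef := by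
  set R := (P.map (algebraMap ℝ ℂ)).roots
  change _ ↔ (bezoutiant n R).PosSemidef
  refine ⟨bezoutiant_posSemidef_of_forall_im_eq_zero, fun hpsd z hz => ?_⟩
  have hcard : R.toFinset.card ≤ n := calc
    _ ≤ Multiset.card R := Multiset.toFinset_card_le R
    _ ≤ (P.map (algebraMap ℝ ℂ)).natDegree := card_roots' _
    _ = n := by rw [natDegree_map, hdeg]
  by_contra him
  exact not_bezoutiant_posSemidef_of_im_ne_zero (fun w => conj_mem_roots_map_algebraMap) hcard hz
    him hpsd

/-- Sylvester's theorem: a monic real polynomial of degree `n` has all roots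
real if and only if its Bezoutiant matrix `(s_{i+j})_{0 ≤ i,j < n}`, built from
the power sums of its complex roots, is positive semidefinite. (The power sums
of the roots of a real polynomial are real, so we take real parts.) -/
theorem roots_real_iff_bezoutiant_posSemidef (n : ℕ) (hn : 0 < n)
    (P : Polynomial ℝ) (hP : P.Monic) (hdeg : P.natDegree = n) :
    (∀ z ∈ (P.map (algebraMap ℝ ℂ)).roots, z.im = 0) ↔
      (Matrix.of fun i j : Fin n =>
        (((P.map (algebraMap ℝ ℂ)).roots.map
          (fun z => z ^ ((i : ℕ) + (j : ℕ)))).sum).re).PosSemidef :=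
  roots_real_iff_bezoutiant_posSemidef_general n P hdeg
end

section
/- If a monic real polynomial P(x) = xⁿ + a₂x^{n−2} − a₃x^{n−3} + … + (−1)ⁿaₙ (with zero coefficient of x^{n−1}) has all roots real and a₂ = 0, then all its roots are equal to zero, i.e. P(x) = xⁿ. -/
/-!
By Vieta, the vanishing coefficients of `x^{n-1}` and `x^{n-2}` say that the first two
elementary symmetric functions of the roots vanish, hence so does the sum of their squares,
`e₁² - 2e₂`. For real roots this forces every root to be zero.
-/

open Polynomial

namespace Multiset

variable {R : Type*}

theorem esymm_one [CommSemiring R] (s : Multiset R) : s.esymm 1 = s.sum := by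
  simp [esymm, powersetCard_one]

theorem esymm_cons_two [CommSemiring R] (a : R) (s : Multiset R) :
    (a ::ₘ s).esymm 2 = a * s.sum + s.esymm 2 := by
  rw [esymm, powersetCard_cons, map_add, sum_add, ← esymm, powersetCard_one, map_map, map_map]
  simp only [Function.comp_def, prod_singleton, prod_cons]
  rw [sum_map_mul_left, map_id', add_comm]

theorem sum_map_sq_add_two_mul_esymm_two [CommSemiring R] (s : Multiset R) :
    (s.map (· ^ 2)).sum + 2 * s.esymm 2 = s.sum ^ 2 := by
  induction s using Multiset.induction with
  | empty => simp [esymm, powersetCard_zero_right]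
  | cons a s ih =>
    rw [map_cons, sum_cons, esymm_cons_two, sum_cons, add_sq, ← ih]
    ring

theorem eq_zero_of_sum_map_sq_eq_zero [CommRing R] [LinearOrder R] [IsStrictOrderedRing R]
    {s : Multiset R} (h : (s.map (· ^ 2)).sum = 0) : ∀ x ∈ s, x = 0 := by
  induction s using Multiset.induction with
  | empty => simp
  | cons a s ih =>
    rw [map_cons, sum_cons] at h
    have hs : 0 ≤ (s.map (· ^ 2)).sum := sum_nonneg fun y hy => by
      obtain ⟨x, -, rfl⟩ := mem_map.1 hy
      positivity
    obtain ⟨ha, hs⟩ := (add_eq_zero_iff_of_nonneg (sq_nonneg a) hs).1 h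
    exact forall_mem_cons.2 ⟨pow_eq_zero_iff two_ne_zero |>.1 ha, ih hs⟩

end Multiset

namespace Polynomial

variable {R : Type*} [CommRing R] {f : R[X]}

theorem Splits.esymm_roots_eq_zero [IsDomain R] (hf : f.Splits) {k : ℕ} (hk : k ≤ f.natDegree)
    (hf0 : f ≠ 0) (h : f.coeff (f.natDegree - k) = 0) : f.roots.esymm k = 0 := by
  rw [coeff_eq_esymm_roots_of_card (splits_iff_card_roots.1 hf) (Nat.sub_le _ _),
    Nat.sub_sub_self hk] at h
  simpa [hf0] using h

theorem Splits.eq_X_pow_of_roots_eq_zero [IsDomain R] (hf : f.Splits) (hm : f.Monic)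
    (h : ∀ x ∈ f.roots, x = 0) : f = X ^ f.natDegree := by
  rw [hf.eq_prod_roots_of_monic hm, Multiset.eq_replicate_card.2 h,
    natDegree_multiset_prod_X_sub_C_eq_card]
  simp

theorem Splits.eq_X_pow_of_coeff_eq_zero [LinearOrder R] [IsStrictOrderedRing R]
    (hf : f.Splits) (hm : f.Monic) (hdeg : 2 ≤ f.natDegree)
    (h1 : f.coeff (f.natDegree - 1) = 0) (h2 : f.coeff (f.natDegree - 2) = 0) :
    f = X ^ f.natDegree := by
  have he1 : f.roots.sum = 0 := by
    rw [← Multiset.esymm_one]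
    exact hf.esymm_roots_eq_zero (by omega) hm.ne_zero h1
  have he2 : f.roots.esymm 2 = 0 := hf.esymm_roots_eq_zero hdeg hm.ne_zero h2
  have hsq : (f.roots.map (· ^ 2)).sum = 0 := by
    simpa [he1, he2] using f.roots.sum_map_sq_add_two_mul_esymm_two
  exact hf.eq_X_pow_of_roots_eq_zero hm (Multiset.eq_zero_of_sum_map_sq_eq_zero hsq)

end Polynomial

/-- Lemma 3.6: a monic real polynomial of degree `n ≥ 2` with all roots real
and vanishing coefficients in degrees `n-1` and `n-2` equals `Xⁿ`, i.e. all its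
roots are zero. -/
theorem eq_X_pow_of_coeffs_zero (n : ℕ) (hn : 2 ≤ n)
    (P : Polynomial ℝ) (hP : P.Monic) (hdeg : P.natDegree = n)
    (h1 : P.coeff (n - 1) = 0) (h2 : P.coeff (n - 2) = 0)
    (hreal : ∀ z ∈ (P.map (algebraMap ℝ ℂ)).roots, z.im = 0) :
    P = X ^ n := by
  have hsplit : P.Splits :=
    Splits.of_splits_map_of_injective (algebraMap ℝ ℂ).injective (IsAlgClosed.splits _)
      fun z hz => ⟨z.re, Complex.ext rfl (hreal z hz).symm⟩
  subst hdeg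
  exact hsplit.eq_X_pow_of_coeff_eq_zero hP hn h1 h2
end

section
/- The ordered-roots map is continuous: on the set of monic real polynomials of degree n with all roots real, the functions P ↦ x₁(P) ≤ x₂(P) ≤ … ≤ xₙ(P) assigning the increasingly ordered real roots are continuous in the coefficients of P. -/
open Polynomial

/-- The monic real polynomial of degree `n` with lower-order coefficient
vector `a : Fin n → ℝ`. -/
noncomputable def mkMonic (n : ℕ) (a : Fin n → ℝ) : Polynomial ℝ :=
  X ^ n + ∑ i : Fin n, C (a i) * X ^ (i : ℕ)

/-! The map sending a root vector `x` to the coefficients of `∏ (X - x_j)` is continuous and,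
by Cauchy's bound on the roots in terms of the coefficients, proper. It is injective on the
closed set of increasing tuples, so restricted there it is a closed embedding whose image is the
set of split polynomials; the ordered-roots map is its inverse, hence continuous. -/

open Topology

theorem IsProperMap.continuousOn_of_rightInvOn {X Y : Type*} [TopologicalSpace X]
    [TopologicalSpace Y] {f : X → Y} {g : Y → X} {K : Set X} {S : Set Y}
    (hf : IsProperMap f) (hK : IsClosed K) (hinj : K.InjOn f) (hg : Set.MapsTo g S K)
    (hfg : Set.RightInvOn g f S) : ContinuousOn g S := by
  have hfK := hf.restrict hK
  have hemb : IsEmbedding (K.domRestrict f) :=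
    (IsClosedEmbedding.of_continuous_injective_isClosedMap hfK.continuous hinj.injective
      hfK.isClosedMap).isEmbedding
  have hgS : Continuous (hg.restrict g S K) :=
    hemb.continuous_iff.2 <| continuous_subtype_val.congr fun y => (hfg y.2).symm
  exact continuousOn_iff_continuous_domRestrict.2 (continuous_subtype_val.comp hgS)

section CoeffsOfRoots

variable {n : ℕ}

-- Up to signs and the order of the entries, this is the elementary symmetric function map `σⁿ`.
noncomputable def coeffsOfRoots (n : ℕ) (x : Fin n → ℝ) : Fin n → ℝ :=
  fun i => (∏ j, (X - C (x j))).coeff i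

lemma coeff_mkMonic (a : Fin n → ℝ) (i : Fin n) : (mkMonic n a).coeff i = a i := by
  simp [mkMonic, finsetSum_coeff, Fin.val_inj, i.2.ne]

lemma mkMonic_injective : Function.Injective (mkMonic n) := fun a b h =>
  funext fun i => by rw [← coeff_mkMonic a i, h, coeff_mkMonic]

lemma mkMonic_coeffsOfRoots (x : Fin n → ℝ) :
    mkMonic n (coeffsOfRoots n x) = ∏ j, (X - C (x j)) := by
  have hdeg : (∏ j, (X - C (x j))).natDegree = n := by simp
  conv_rhs => rw [(monic_prod_X_sub_C x Finset.univ).as_sum, hdeg]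
  rw [mkMonic, Finset.sum_range]
  rfl

lemma eq_coeffsOfRoots_of_mkMonic_eq {a x : Fin n → ℝ} (h : mkMonic n a = ∏ j, (X - C (x j))) :
    a = coeffsOfRoots n x :=
  mkMonic_injective (h.trans (mkMonic_coeffsOfRoots x).symm)

lemma exists_monotone_of_mkMonic_eq_prod {a x : Fin n → ℝ}
    (h : mkMonic n a = ∏ j, (X - C (x j))) :
    ∃ y : Fin n → ℝ, Monotone y ∧ mkMonic n a = ∏ j, (X - C (y j)) :=
  ⟨x ∘ Tuple.sort x, Tuple.monotone_sort x,
    h.trans (Equiv.prod_comp (Tuple.sort x) fun j => X - C (x j)).symm⟩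

lemma continuous_coeffsOfRoots : Continuous (coeffsOfRoots n) := by
  refine continuous_pi fun i => ?_
  have hvieta : ∀ x : Fin n → ℝ, coeffsOfRoots n x i =
      (-1) ^ (n - i) * ∑ t ∈ Finset.univ.powersetCard (n - i), ∏ j ∈ t, x j := by
    intro x
    have h := (Finset.univ.val.map x).prod_X_sub_C_coeff (k := i) (by simp [i.2.le])
    rw [Multiset.map_map, Multiset.card_map, Finset.card_val, Finset.card_univ, Fintype.card_fin,
      Finset.esymm_map_val] at h
    exact h
  simp only [hvieta]
  fun_prop

lemma norm_le_norm_coeffsOfRoots_add_one (x : Fin n → ℝ) :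
    ‖x‖ ≤ ‖coeffsOfRoots n x‖ + 1 := by
  set p := ∏ j, (X - C (x j))
  have hmonic : p.Monic := monic_prod_X_sub_C x Finset.univ
  have hbound : cauchyBound p ≤ ‖coeffsOfRoots n x‖₊ + 1 := by
    rw [cauchyBound, hmonic.leadingCoeff, nnnorm_one, div_one]
    gcongr
    refine Finset.sup_le fun i hi => ?_
    have hi : i < n := by simpa [p] using hi
    exact nnnorm_le_pi_nnnorm (coeffsOfRoots n x) ⟨i, hi⟩
  refine (pi_norm_le_iff_of_nonneg (by positivity)).2 fun j => ?_
  have hroot : p.IsRoot (x j) := by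
    simp [p, IsRoot, eval_prod, Finset.prod_eq_zero_iff, sub_eq_zero]
  exact_mod_cast ((hroot.norm_lt_cauchyBound hmonic.ne_zero).trans_le hbound).le

lemma isProperMap_coeffsOfRoots : IsProperMap (coeffsOfRoots n) := by
  refine isProperMap_iff_isCompact_preimage.2 ⟨continuous_coeffsOfRoots, fun K hK => ?_⟩
  obtain ⟨R, hR⟩ := hK.isBounded.subset_closedBall 0
  refine Metric.isCompact_of_isClosed_isBounded
    (hK.isClosed.preimage continuous_coeffsOfRoots) ?_
  refine (Metric.isBounded_closedBall (x := 0) (r := R + 1)).subset fun x hx => ?_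
  have hxR : ‖coeffsOfRoots n x‖ ≤ R := by simpa using hR hx
  simpa using (norm_le_norm_coeffsOfRoots_add_one x).trans (by linarith)

lemma injOn_coeffsOfRoots_setOf_monotone :
    {x : Fin n → ℝ | Monotone x}.InjOn (coeffsOfRoots n) := by
  intro x hx y hy h
  have hprod : ∏ j, (X - C (x j)) = ∏ j, (X - C (y j)) := by
    rw [← mkMonic_coeffsOfRoots, h, mkMonic_coeffsOfRoots]
  have hroots (z : Fin n → ℝ) : (∏ j, (X - C (z j))).roots = (List.ofFn z : Multiset ℝ) := by
    rw [← Fin.univ_val_map, ← roots_multiset_prod_X_sub_C (Finset.univ.val.map z),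
      Multiset.map_map]
    rfl
  have hperm : (List.ofFn x).Perm (List.ofFn y) :=
    Multiset.coe_eq_coe.1 (by rw [← hroots, ← hroots, hprod])
  exact List.ofFn_injective (hperm.eq_of_sortedLE hx.sortedLE_ofFn hy.sortedLE_ofFn)

end CoeffsOfRoots

/-- Lemma 4.1: on the set of (coefficient vectors of) monic real polynomials of
degree `n` splitting over `ℝ`, the increasingly ordered roots can be chosen, and
each of them depends continuously on the coefficients. -/
theorem ordered_roots_continuous (n : ℕ) :
    ∃ ξ : (Fin n → ℝ) → Fin n → ℝ,
      (∀ a ∈ {a : Fin n → ℝ | ∃ x : Fin n → ℝ, mkMonic n a = ∏ i, (X - C (x i))},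
        mkMonic n a = ∏ i, (X - C (ξ a i))) ∧
      (∀ a ∈ {a : Fin n → ℝ | ∃ x : Fin n → ℝ, mkMonic n a = ∏ i, (X - C (x i))},
        Monotone (ξ a)) ∧
      ∀ i : Fin n, ContinuousOn (fun a => ξ a i)
        {a : Fin n → ℝ | ∃ x : Fin n → ℝ, mkMonic n a = ∏ i, (X - C (x i))} := by
  have hsorted : ∀ a ∈ {a : Fin n → ℝ | ∃ x : Fin n → ℝ, mkMonic n a = ∏ i, (X - C (x i))},
      ∃ x : Fin n → ℝ, Monotone x ∧ mkMonic n a = ∏ i, (X - C (x i)) :=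
    fun _ ⟨_, hx⟩ => exists_monotone_of_mkMonic_eq_prod hx
  choose! ξ hξmono hξ using hsorted
  refine ⟨ξ, hξ, hξmono, fun i => (continuous_apply i).comp_continuousOn ?_⟩
  exact isProperMap_coeffsOfRoots.continuousOn_of_rightInvOn isClosed_monotone
    injOn_coeffsOfRoots_setOf_monotone hξmono
    fun a ha => (eq_coeffsOfRoots_of_mkMonic_eq (hξ a ha)).symm
end

section
/- Let λ(t) be an eigenvalue function, differentiable in t, of a smooth curve A(t) of hermitian n×n complex matrices, and suppose at a point t there is an orthonormal basis situation where w(t) is a unit eigenvector of A(t) for λ(t) arising as a limit of eigenvectors for nearby parameters. Then λ'(t) = ⟨A'(t)w(t), w(t)⟩ for some unit eigenvector w(t) of A(t) with eigenvalue λ(t); in particular |λ'(t)| ≤ ‖A'(t)‖. -/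
/-!
Choose unit eigenvectors `u s` of `A s` for `l s`. Along an ultrafilter finer than `𝓝[≠] t` they
converge, by compactness of the unit sphere, to a unit eigenvector `w` of `A t`. As `A t` is
hermitian, `⟨w, (A s - A t) u s⟩ = (l s - l t) ⟨w, u s⟩`; dividing by `s - t` and passing to the
limit gives `l' t = ⟨w, A' t w⟩`, and Cauchy–Schwarz bounds this by `‖A' t‖`.
-/

open Matrix

open Filter Topology WithLp

section UnitVectors

variable {𝕜 ι : Type*} [RCLike 𝕜] [Fintype ι]

theorem star_ofLp_dotProduct_ofLp (x : EuclideanSpace 𝕜 ι) :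
    star (ofLp x) ⬝ᵥ ofLp x = (‖x‖ : 𝕜) ^ 2 := by
  rw [dotProduct_comm, ← EuclideanSpace.inner_eq_star_dotProduct, inner_self_eq_norm_sq_to_K]

theorem norm_eq_one_iff_star_ofLp_dotProduct_ofLp (x : EuclideanSpace 𝕜 ι) :
    ‖x‖ = 1 ↔ star (ofLp x) ⬝ᵥ ofLp x = 1 := by
  rw [star_ofLp_dotProduct_ofLp, ← pow_eq_one_iff_of_nonneg (norm_nonneg x) two_ne_zero]
  norm_cast

theorem isCompact_setOf_star_dotProduct_self_eq_one :
    IsCompact {v : ι → 𝕜 | star v ⬝ᵥ v = 1} := by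
  convert (isCompact_sphere (0 : EuclideanSpace 𝕜 ι) 1).image (PiLp.continuous_ofLp 2 _)
  ext v
  simp only [Set.mem_ofPred_eq, Set.mem_image, mem_sphere_zero_iff_norm,
    norm_eq_one_iff_star_ofLp_dotProduct_ofLp]
  exact ⟨fun hv => ⟨toLp 2 v, hv, rfl⟩, by rintro ⟨x, hx, rfl⟩; exact hx⟩

theorem exists_star_dotProduct_self_eq_one_of_mulVec_eq_smul {M : Matrix ι ι 𝕜} {μ : 𝕜}
    {v : ι → 𝕜} (hv : v ≠ 0) (hMv : M *ᵥ v = μ • v) :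
    ∃ u, star u ⬝ᵥ u = 1 ∧ M *ᵥ u = μ • u := by
  have hx : toLp 2 v ≠ 0 := by simpa using hv
  refine ⟨(‖toLp 2 v‖⁻¹ : 𝕜) • v, ?_, ?_⟩
  · simpa only [ofLp_smul, ofLp_toLp] using
      (norm_eq_one_iff_star_ofLp_dotProduct_ofLp _).1 (norm_smul_inv_norm (𝕜 := 𝕜) hx)
  · rw [mulVec_smul, hMv, smul_comm]

theorem norm_star_dotProduct_mulVec_le [DecidableEq ι] (M : Matrix ι ι 𝕜) {w : ι → 𝕜}
    (hw : star w ⬝ᵥ w = 1) : ‖star w ⬝ᵥ (M *ᵥ w)‖ ≤ ‖toEuclideanCLM (𝕜 := 𝕜) M‖ := by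
  set x := toLp 2 w
  have hx : ‖x‖ = 1 := (norm_eq_one_iff_star_ofLp_dotProduct_ofLp x).2 hw
  have hinner : star w ⬝ᵥ (M *ᵥ w) = inner 𝕜 x (toEuclideanCLM (𝕜 := 𝕜) M x) := by
    rw [EuclideanSpace.inner_eq_star_dotProduct, dotProduct_comm]
    rfl
  calc ‖star w ⬝ᵥ (M *ᵥ w)‖ ≤ ‖x‖ * ‖toEuclideanCLM (𝕜 := 𝕜) M x‖ := by
        rw [hinner]; exact norm_inner_le_norm _ _
    _ ≤ ‖x‖ * (‖toEuclideanCLM (𝕜 := 𝕜) M‖ * ‖x‖) := by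
        gcongr; exact ContinuousLinearMap.le_opNorm _ _
    _ = ‖toEuclideanCLM (𝕜 := 𝕜) M‖ := by rw [hx, one_mul, mul_one]

end UnitVectors

theorem Filter.Tendsto.matrix_mulVec {α m n R : Type*} [Fintype n] [NonUnitalNonAssocSemiring R]
    [TopologicalSpace R] [IsTopologicalSemiring R] {F : Filter α} {M : α → Matrix m n R}
    {v : α → n → R} {M₀ : Matrix m n R} {v₀ : n → R} (hM : Tendsto M F (𝓝 M₀))
    (hv : Tendsto v F (𝓝 v₀)) : Tendsto (fun a => M a *ᵥ v a) F (𝓝 (M₀ *ᵥ v₀)) :=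
  ((continuous_fst.matrix_mulVec continuous_snd).tendsto (M₀, v₀)).comp (hM.prodMk_nhds hv)

theorem mulVec_eq_smul_of_tendsto {α ι R : Type*} [Fintype ι] [Semiring R] [TopologicalSpace R]
    [IsTopologicalSemiring R] [T2Space R] {F : Filter α} [F.NeBot] {M : α → Matrix ι ι R}
    {μ : α → R} {v : α → ι → R} {M₀ : Matrix ι ι R} {μ₀ : R} {v₀ : ι → R}
    (hM : Tendsto M F (𝓝 M₀)) (hμ : Tendsto μ F (𝓝 μ₀)) (hv : Tendsto v F (𝓝 v₀))
    (h : ∀ᶠ a in F, M a *ᵥ v a = μ a • v a) : M₀ *ᵥ v₀ = μ₀ • v₀ :=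
  tendsto_nhds_unique ((hM.matrix_mulVec hv).congr' h) (hμ.smul hv)

theorem Matrix.IsHermitian.star_dotProduct_sub_mulVec {ι R : Type*} [Fintype ι] [CommRing R]
    [StarRing R] {M N : Matrix ι ι R} (hM : M.IsHermitian) {μ ν : R} {v w : ι → R}
    (hw : M *ᵥ w = μ • w) (hv : N *ᵥ v = ν • v) :
    star w ⬝ᵥ ((N - M) *ᵥ v) = (ν - star μ) * (star w ⬝ᵥ v) := by
  have hwM : star w ᵥ* M = star μ • star w := by
    rw [← hM.eq, ← star_mulVec, hw, star_smul]
  rw [sub_mulVec, dotProduct_sub, hv, dotProduct_mulVec, hwM, dotProduct_smul, smul_dotProduct,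
    smul_eq_mul, smul_eq_mul, sub_mul]

section EntrywiseDerivative

variable {m n E : Type*} [NormedAddCommGroup E] [NormedSpace ℝ E] {A : ℝ → Matrix m n E}
  {A' : Matrix m n E} {t : ℝ}

theorem tendsto_slope_of_hasDerivAt_apply (h : ∀ i j, HasDerivAt (fun s => A s i j) (A' i j) t) :
    Tendsto (slope A t) (𝓝[≠] t) (𝓝 A') :=
  tendsto_pi_nhds.2 fun i => tendsto_pi_nhds.2 fun j => hasDerivAt_iff_tendsto_slope.1 (h i j)

theorem continuousAt_of_hasDerivAt_apply (h : ∀ i j, HasDerivAt (fun s => A s i j) (A' i j) t) :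
    ContinuousAt A t :=
  continuousAt_pi.2 fun i => continuousAt_pi.2 fun j => (h i j).continuousAt

end EntrywiseDerivative

theorem ofReal_mul_star_dotProduct_self_eq_of_tendsto_eigenvector {ι : Type*} [Fintype ι]
    {A : ℝ → Matrix ι ι ℂ} {A' : Matrix ι ι ℂ} {l : ℝ → ℝ} {l' t : ℝ} {u : ℝ → ι → ℂ}
    {w : ι → ℂ} {F : Filter ℝ} [F.NeBot] (hF : F ≤ 𝓝[≠] t)
    (hA : Tendsto (slope A t) (𝓝[≠] t) (𝓝 A'))
    (hl : HasDerivAt l l' t) (hherm : (A t).IsHermitian)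
    (hu : ∀ᶠ s in F, A s *ᵥ u s = (l s : ℂ) • u s) (hw : A t *ᵥ w = (l t : ℂ) • w)
    (huw : Tendsto u F (𝓝 w)) :
    (l' : ℂ) * (star w ⬝ᵥ w) = star w ⬝ᵥ (A' *ᵥ w) := by
  have hquot : ∀ᶠ s in F, (slope l t s : ℂ) * (star w ⬝ᵥ u s) =
      star w ⬝ᵥ (slope A t s *ᵥ u s) := by
    filter_upwards [hu] with s hs
    rw [slope_def_module, slope_def_module, smul_mulVec, dotProduct_smul,
      hherm.star_dotProduct_sub_mulVec hw hs, Complex.star_def, Complex.conj_ofReal, smul_eq_mul,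
      Complex.real_smul]
    push_cast
    ring
  have hslope_l : Tendsto (fun s => (slope l t s : ℂ)) F (𝓝 (l' : ℂ)) :=
    (Complex.continuous_ofReal.tendsto l').comp ((hasDerivAt_iff_tendsto_slope.1 hl).mono_left hF)
  have hdot : Tendsto (fun s => star w ⬝ᵥ u s) F (𝓝 (star w ⬝ᵥ w)) :=
    ((continuous_const.dotProduct continuous_id).tendsto w).comp huw
  have hslope_A : Tendsto (fun s => star w ⬝ᵥ (slope A t s *ᵥ u s)) F
      (𝓝 (star w ⬝ᵥ (A' *ᵥ w))) :=
    ((continuous_const.dotProduct continuous_id).tendsto _).comp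
      ((hA.mono_left hF).matrix_mulVec huw)
  exact tendsto_nhds_unique ((hslope_l.mul hdot).congr' hquot) hslope_A

theorem eigenvalue_derivative_formula_general (n : ℕ)
    (A A' : ℝ → Matrix (Fin n) (Fin n) ℂ)
    (hA' : ∀ i j t, HasDerivAt (fun s => A s i j) (A' t i j) t)
    (hherm : ∀ t, (A t).IsHermitian)
    (l : ℝ → ℝ) (hl : Differentiable ℝ l)
    (heig : ∀ t, ∃ v : Fin n → ℂ, v ≠ 0 ∧ A t *ᵥ v = (Complex.ofReal (l t)) • v)
    (t : ℝ) :
    ∃ w : Fin n → ℂ,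
      star w ⬝ᵥ w = 1 ∧
      A t *ᵥ w = (Complex.ofReal (l t)) • w ∧
      (Complex.ofReal (deriv l t)) = star w ⬝ᵥ (A' t *ᵥ w) ∧
      |deriv l t| ≤ ‖Matrix.toEuclideanCLM (𝕜 := ℂ) (A' t)‖ := by
  choose u hu using fun s =>
    let ⟨_, hv, hMv⟩ := heig s
    exists_star_dotProduct_self_eq_one_of_mulVec_eq_smul hv hMv
  let F := Ultrafilter.of (𝓝[≠] t)
  obtain ⟨w, hw_unit, huw : Tendsto u F (𝓝 w)⟩ :=
    isCompact_setOf_star_dotProduct_self_eq_one.ultrafilter_le_nhds' (F.map u)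
      (Filter.mem_map.2 (Filter.univ_mem' fun s => (hu s).1))
  have hF : (F : Filter ℝ) ≤ 𝓝 t := (Ultrafilter.of_le _).trans nhdsWithin_le_nhds
  have hA_lim : Tendsto A F (𝓝 (A t)) :=
    (continuousAt_of_hasDerivAt_apply fun i j => hA' i j t).mono_left hF
  have hl_lim : Tendsto (fun s => (l s : ℂ)) F (𝓝 (l t : ℂ)) :=
    (Complex.continuous_ofReal.tendsto _).comp ((hl t).continuousAt.mono_left hF)
  have hw_eig : A t *ᵥ w = (l t : ℂ) • w :=
    mulVec_eq_smul_of_tendsto hA_lim hl_lim huw (.of_forall fun s => (hu s).2)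
  have hformula : ((deriv l t : ℝ) : ℂ) * (star w ⬝ᵥ w) = star w ⬝ᵥ (A' t *ᵥ w) :=
    ofReal_mul_star_dotProduct_self_eq_of_tendsto_eigenvector (Ultrafilter.of_le _)
      (tendsto_slope_of_hasDerivAt_apply fun i j => hA' i j t) (hl t).hasDerivAt (hherm t)
      (.of_forall fun s => (hu s).2) hw_eig huw
  rw [hw_unit, mul_one] at hformula
  refine ⟨w, hw_unit, hw_eig, hformula, ?_⟩
  rw [← Real.norm_eq_abs, ← Complex.norm_real, hformula]
  exact norm_star_dotProduct_mulVec_le (A' t) hw_unit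

/-- Feynman–Hellmann type formula: if `A(t)` is a smooth curve of hermitian
`n×n` complex matrices (with entrywise derivative `A'`) and `λ` is a
differentiable real eigenvalue function of `A`, then at each `t` there is a
unit eigenvector `w` of `A(t)` for `λ(t)` with `λ'(t) = ⟨A'(t)w, w⟩`; in
particular `|λ'(t)| ≤ ‖A'(t)‖` (operator norm on Euclidean space). -/
theorem eigenvalue_derivative_formula (n : ℕ)
    (A A' : ℝ → Matrix (Fin n) (Fin n) ℂ)
    (hA : ∀ i j, ContDiff ℝ (⊤ : ℕ∞) (fun t => A t i j))
    (hA' : ∀ i j t, HasDerivAt (fun s => A s i j) (A' t i j) t)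
    (hherm : ∀ t, (A t).IsHermitian)
    (l : ℝ → ℝ) (hl : Differentiable ℝ l)
    (heig : ∀ t, ∃ v : Fin n → ℂ, v ≠ 0 ∧ A t *ᵥ v = (Complex.ofReal (l t)) • v)
    (t : ℝ) :
    ∃ w : Fin n → ℂ,
      star w ⬝ᵥ w = 1 ∧
      A t *ᵥ w = (Complex.ofReal (l t)) • w ∧
      (Complex.ofReal (deriv l t)) = star w ⬝ᵥ (A' t *ᵥ w) ∧
      |deriv l t| ≤ ‖Matrix.toEuclideanCLM (𝕜 := ℂ) (A' t)‖ :=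
  eigenvalue_derivative_formula_general n A A' hA' hherm l hl heig t
end

section
/- Define A(t) = e^{−1/t²}·[[cos(2/t), sin(2/t)], [sin(2/t), −cos(2/t)]] for t ≠ 0 and A(0) = 0. Then t ↦ A(t) is a smooth curve of real symmetric 2×2 matrices with smooth eigenvalues λ±(t) = ±e^{−1/t²}, but there is no continuous map t ↦ v(t) ∈ ℝ² \ {0} defined on a neighborhood of 0 with v(t) an eigenvector of A(t) for λ₊(t) for all t ≠ 0. -/
/-!
The entries of `A` are the real and imaginary parts of `t ↦ exp (-1/t² + 2i/t)`. This is smooth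
by the argument Mathlib uses for `expNegInvGlue`: the functions `t ↦ P(1/t) exp (-1/t² + iω/t)`,
`P ∈ ℂ[X]`, extended by `0`, form a family closed under `d/dt`, and each of them tends to `0` at
`0` because `exp (-1/t²)` beats every power of `1/t`.

For `t ≠ 0`, `A t` is `exp (-1/t²)` times the reflection in the line of angle `1/t`, so an
eigenvector for `λ₊` is parallel to `(cos (1/t), sin (1/t))`. Along `t = 1/(θ + 2πk) → 0` this
direction is constantly `θ`, so a continuous eigenvector field has `v 0` parallel to
`(cos θ, sin θ)` for every `θ`, hence `v 0 = 0`.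
-/

open Filter Topology Matrix

section

open Polynomial Complex

noncomputable def flatOsc (ω : ℝ) (P : ℂ[X]) (t : ℝ) : ℂ :=
  if t = 0 then 0 else P.eval (t : ℂ)⁻¹ * cexp (-(t : ℂ)⁻¹ ^ 2 + ω * I * (t : ℂ)⁻¹)

namespace flatOsc

variable (ω : ℝ)

theorem add (P Q : ℂ[X]) : flatOsc ω (P + Q) = flatOsc ω P + flatOsc ω Q := by
  ext1 t
  by_cases ht : t = 0 <;> simp [flatOsc, ht, add_mul]

theorem norm_monomial (n : ℕ) (c : ℂ) {t : ℝ} (ht : t ≠ 0) :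
    ‖flatOsc ω (monomial n c) t‖ = ‖c‖ * (|t⁻¹| ^ (n : ℝ) * Real.exp (-1 * t⁻¹ ^ 2)) := by
  rw [flatOsc, if_neg ht, eval_monomial, norm_mul, norm_mul, mul_assoc, Complex.norm_exp,
    norm_pow, Real.rpow_natCast, ← ofReal_inv, norm_real, Real.norm_eq_abs]
  simp [← ofReal_pow]

theorem tendsto_nhdsNE_zero (P : ℂ[X]) : Tendsto (flatOsc ω P) (𝓝[≠] 0) (𝓝 0) := by
  induction P using Polynomial.induction_on' with
  | add P Q hP hQ => rw [add, ← add_zero (0 : ℂ)]; exact hP.add hQ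
  | monomial n c =>
    have h := ((tendsto_rpow_abs_mul_exp_neg_mul_sq_cocompact one_pos n).comp
      (Metric.cobounded_eq_cocompact (α := ℝ) ▸ tendsto_inv₀_nhdsNE_zero)).const_mul ‖c‖
    rw [mul_zero] at h
    refine tendsto_zero_iff_norm_tendsto_zero.2 (h.congr' ?_)
    filter_upwards [self_mem_nhdsWithin] with t ht
    exact (norm_monomial ω n c ht).symm

theorem hasDerivAt (P : ℂ[X]) (t : ℝ) :
    HasDerivAt (flatOsc ω P)
      (flatOsc ω (-X ^ 2 * (derivative P + P * (C (ω * I) - 2 * X))) t) t := by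
  rcases eq_or_ne t 0 with rfl | ht
  · rw [hasDerivAt_iff_tendsto_slope, flatOsc, if_pos rfl]
    refine (tendsto_nhdsNE_zero ω (X * P)).congr fun s => ?_
    simp [flatOsc, slope_def_module, mul_assoc]
  · have hE (z : ℂ) : HasDerivAt (fun z => P.eval z * cexp (-z ^ 2 + ω * I * z))
        ((derivative P).eval z * cexp (-z ^ 2 + ω * I * z) +
          P.eval z * ((-(2 * z) + ω * I) * cexp (-z ^ 2 + ω * I * z))) z := by
      refine (P.hasDerivAt z).mul ?_
      have hq : HasDerivAt (fun z : ℂ => -z ^ 2 + ω * I * z) (-(2 * z) + ω * I) z := by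
        simpa using (hasDerivAt_pow 2 z).fun_neg.fun_add ((hasDerivAt_id' z).const_mul (ω * I))
      exact hq.cexp.congr_deriv (mul_comm _ _)
    have := ((hE _).comp_ofReal).scomp t (hasDerivAt_inv ht)
    refine (this.congr_of_eventuallyEq ?_).congr_deriv ?_
    · filter_upwards [isOpen_compl_singleton.mem_nhds ht] with s (hs : s ≠ 0)
      simp [flatOsc, hs]
    · simp [flatOsc, ht]
      ring

theorem contDiff {n : ℕ∞} (P : ℂ[X]) : ContDiff ℝ n (flatOsc ω P) := by
  refine contDiff_all_iff_nat.2 (fun m => ?_) n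
  induction m generalizing P with
  | zero => exact contDiff_zero.2 (continuous_iff_continuousAt.2 fun t =>
      (hasDerivAt ω P t).continuousAt)
  | succ m ih =>
    rw [show ((m + 1 : ℕ) : WithTop ℕ∞) = m + 1 from rfl]
    have hderiv : deriv (flatOsc ω P) =
        flatOsc ω (-X ^ 2 * (derivative P + P * (C (ω * I) - 2 * X))) :=
      funext fun t => (hasDerivAt ω P t).deriv
    exact contDiff_succ_iff_deriv.2
      ⟨fun t => (hasDerivAt ω P t).differentiableAt, by simp, hderiv ▸ ih _⟩

theorem one_apply {t : ℝ} (ht : t ≠ 0) :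
    flatOsc ω 1 t = cexp (((-1 / t ^ 2 : ℝ) : ℂ) + ((ω / t : ℝ) : ℂ) * I) := by
  rw [flatOsc, if_neg ht, eval_one, one_mul]
  push_cast
  ring_nf

end flatOsc

theorem contDiff_exp_neg_inv_sq_mul_cos {n : ℕ∞} (ω : ℝ) :
    ContDiff ℝ n fun t : ℝ => if t = 0 then 0 else Real.exp (-1 / t ^ 2) * Real.cos (ω / t) := by
  convert reCLM.contDiff.comp (flatOsc.contDiff ω (n := n) 1) using 1
  ext t
  rcases eq_or_ne t 0 with rfl | ht
  · simp [flatOsc]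
  · simp only [ht, if_false, Function.comp_apply, reCLM_apply, flatOsc.one_apply ω ht, exp_re,
      add_re, add_im, ofReal_re, ofReal_im, re_ofReal_mul, im_ofReal_mul, I_re, I_im]
    ring_nf

theorem contDiff_exp_neg_inv_sq_mul_sin {n : ℕ∞} (ω : ℝ) :
    ContDiff ℝ n fun t : ℝ => if t = 0 then 0 else Real.exp (-1 / t ^ 2) * Real.sin (ω / t) := by
  convert imCLM.contDiff.comp (flatOsc.contDiff ω (n := n) 1) using 1
  ext t
  rcases eq_or_ne t 0 with rfl | ht
  · simp [flatOsc]
  · simp only [ht, if_false, Function.comp_apply, imCLM_apply, flatOsc.one_apply ω ht, exp_im,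
      add_re, add_im, ofReal_re, ofReal_im, re_ofReal_mul, im_ofReal_mul, I_re, I_im]
    ring_nf

end

open Real

noncomputable def reflectionMatrix (θ : ℝ) : Matrix (Fin 2) (Fin 2) ℝ :=
  !![cos (2 * θ), sin (2 * θ); sin (2 * θ), -cos (2 * θ)]

theorem reflectionMatrix_isSymm (θ : ℝ) : (reflectionMatrix θ).IsSymm := by
  ext i j
  fin_cases i <;> fin_cases j <;> rfl

theorem reflectionMatrix_mulVec_cos_sin (θ : ℝ) :
    reflectionMatrix θ *ᵥ ![cos θ, sin θ] = ![cos θ, sin θ] := by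
  ext i
  fin_cases i
  · simp [reflectionMatrix, cos_two_mul, sin_two_mul]
    linear_combination 2 * cos θ * sin_sq_add_cos_sq θ
  · simp [reflectionMatrix, cos_two_mul, sin_two_mul]
    ring

theorem sin_mul_eq_cos_mul_of_reflectionMatrix_mulVec {θ : ℝ} {v : Fin 2 → ℝ}
    (h : reflectionMatrix θ *ᵥ v = v) : v 0 * sin θ = v 1 * cos θ := by
  have h0 := congrFun h 0
  have h1 := congrFun h 1
  simp [reflectionMatrix, cos_two_mul, sin_two_mul, vecHead, vecTail] at h0 h1
  linear_combination (-sin θ / 2) * h0 + (cos θ / 2) * h1 + v 1 * cos θ * sin_sq_add_cos_sq θ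

theorem tendsto_inv_add_nat_mul_two_pi (θ : ℝ) :
    Tendsto (fun k : ℕ => (θ + k * (2 * π))⁻¹) atTop (𝓝[≠] 0) :=
  (tendsto_inv_atTop_nhdsGT_zero.comp (tendsto_atTop_add_const_left _ θ
    (tendsto_natCast_atTop_atTop.atTop_mul_const (by positivity)))).mono_right
    (nhdsWithin_mono _ fun _ h => ne_of_gt h)

theorem eq_zero_of_continuousAt_of_sin_mul_eq_cos_mul {v : ℝ → Fin 2 → ℝ}
    (hv : ContinuousAt v 0) (h : ∀ᶠ t in 𝓝[≠] 0, v t 0 * sin t⁻¹ = v t 1 * cos t⁻¹) :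
    v 0 = 0 := by
  have key (θ : ℝ) : v 0 0 * sin θ = v 0 1 * cos θ := by
    have hs := tendsto_inv_add_nat_mul_two_pi θ
    have hlim (i : Fin 2) : Tendsto (fun k : ℕ => v (θ + k * (2 * π))⁻¹ i) atTop (𝓝 (v 0 i)) :=
      ((continuous_apply i).tendsto _).comp (hv.tendsto.comp (hs.mono_right nhdsWithin_le_nhds))
    refine tendsto_nhds_unique_of_eventuallyEq ((hlim 0).mul_const _) ((hlim 1).mul_const _) ?_
    filter_upwards [hs.eventually h] with k hk
    simpa [sin_add_nat_mul_two_pi, cos_add_nat_mul_two_pi] using hk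
  have h0 := key (π / 2)
  have h1 := key 0
  simp only [sin_pi_div_two, cos_pi_div_two, sin_zero, cos_zero, mul_one, mul_zero] at h0 h1
  ext i
  fin_cases i
  · exact h0
  · exact h1.symm

/-- Example 7.7: `A(t) = e^{-1/t²}·[[cos(2/t), sin(2/t)], [sin(2/t), −cos(2/t)]]`
for `t ≠ 0`, `A(0) = 0`, is a smooth curve of symmetric `2×2` real matrices with
smooth eigenvalues `±e^{-1/t²}` (extended by `0` at `t = 0`), but there is no
continuous nonvanishing eigenvector field for the eigenvalue `λ₊` near `0`. -/
theorem no_continuous_eigenvectors :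
    ∀ A : ℝ → Matrix (Fin 2) (Fin 2) ℝ,
    (∀ t : ℝ, t ≠ 0 → A t = Real.exp (-1 / t ^ 2) •
        !![Real.cos (2 / t), Real.sin (2 / t); Real.sin (2 / t), -Real.cos (2 / t)]) →
    A 0 = 0 →
    (∀ i j, ContDiff ℝ (⊤ : ℕ∞) (fun t => A t i j)) ∧
    (∀ t, (A t).IsSymm) ∧
    ContDiff ℝ (⊤ : ℕ∞) (fun t : ℝ => if t = 0 then 0 else Real.exp (-1 / t ^ 2)) ∧
    (∀ t : ℝ, ∃ v : Fin 2 → ℝ, v ≠ 0 ∧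
      A t *ᵥ v = (if t = 0 then 0 else Real.exp (-1 / t ^ 2)) • v) ∧
    ¬ ∃ (v : ℝ → Fin 2 → ℝ) (U : Set ℝ), U ∈ nhds 0 ∧ ContinuousOn v U ∧
        (∀ t ∈ U, v t ≠ 0) ∧
        ∀ t ∈ U, t ≠ 0 →
          A t *ᵥ v t = Real.exp (-1 / t ^ 2) • v t := by
  intro A hA hA0
  have hA_eq (t : ℝ) (ht : t ≠ 0) : A t = exp (-1 / t ^ 2) • reflectionMatrix t⁻¹ := by
    rw [hA t ht, reflectionMatrix, ← div_eq_mul_inv]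
  refine ⟨fun i j => ?_, fun t => ?_, ?_, fun t => ?_, ?_⟩
  · have hentry (t : ℝ) : A t i j = if t = 0 then 0 else exp (-1 / t ^ 2) *
        !![cos (2 / t), sin (2 / t); sin (2 / t), -cos (2 / t)] i j := by
      rcases eq_or_ne t 0 with rfl | ht
      · simp [hA0]
      · simp [hA t ht, ht]
    fin_cases i <;> fin_cases j <;> simp only [hentry] <;> simp
    · exact contDiff_exp_neg_inv_sq_mul_cos 2
    · exact contDiff_exp_neg_inv_sq_mul_sin 2
    · exact contDiff_exp_neg_inv_sq_mul_sin 2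
    · simpa [apply_ite] using (contDiff_exp_neg_inv_sq_mul_cos 2).neg
  · rcases eq_or_ne t 0 with rfl | ht
    · exact hA0 ▸ isSymm_zero
    · exact hA_eq t ht ▸ (reflectionMatrix_isSymm _).smul _
  · simpa using contDiff_exp_neg_inv_sq_mul_cos (n := ⊤) 0
  · rcases eq_or_ne t 0 with rfl | ht
    · exact ⟨![1, 0], by simp, by simp [hA0]⟩
    · refine ⟨![cos t⁻¹, sin t⁻¹], fun h => ?_, ?_⟩
      · have := sin_sq_add_cos_sq t⁻¹
        simp_all
      · rw [if_neg ht, hA_eq t ht, smul_mulVec, reflectionMatrix_mulVec_cos_sin]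
  · rintro ⟨v, U, hU, hvc, hvne, hev⟩
    refine hvne 0 (mem_of_mem_nhds hU) (eq_zero_of_continuousAt_of_sin_mul_eq_cos_mul
      (hvc.continuousAt hU) ?_)
    filter_upwards [nhdsWithin_le_nhds hU, self_mem_nhdsWithin] with t htU (ht : t ≠ 0)
    refine sin_mul_eq_cos_mul_of_reflectionMatrix_mulVec
      (smul_right_injective _ (exp_pos (-1 / t ^ 2)).ne' ?_)
    dsimp only
    rw [← smul_mulVec, ← hA_eq t ht]
    exact hev t htU ht
end
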